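/- arXiv:1912.13154 — 3 statements merged into one kernel-verified Lean document; each statement's English description precedes it below -/
import Mathlib

section
/- Consider the error dynamics ṡ = −η s + f̃ with η > 0 under the monotonicity assumption (with function α(x, t) and constant D₁ > 0), together with the momentum-plus-elastic algorithm v̂̇ = −γ f̃ α, â̇ = β 𝒩(v̂ − â) + k β 𝒩(ā − â), ā̇ = k β 𝒩(â − ā), with 1/3 ≤ k < 1, 𝒩(t) = 1 + μ‖α(x(t), t)‖², γ, β > 0, and μ > 2 D₁ γ/(β(1 − k)). Then all trajectories (x, â, v̂, ā) remain bounded, f̃ ∈ L² ∩ L∞, s ∈ L² ∩ L∞, (â − v̂) ∈ L², (â − ā) ∈ L², s(t) → 0 as t → ∞, and x(t) → x_d(t). -/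
/-!
A Lyapunov argument. With `u = v̂ - â` and `z = ā - â`, the function
`V = λ s² / 2 + (‖v̂ - a‖² + ‖u‖² + k ‖z‖²) / (2γ)` satisfies, along the closed loop,
`V̇ = λ s ṡ - f̃ (â - a)ᵀα - 2 f̃ uᵀα - (𝒩 / γ) (‖u + k z‖² + k² ‖z‖²)`.
Monotonicity bounds the second term by `-f̃² / D₁`. Young's inequality with weight `2γ / (βμ)`
splits the cross term into a multiple of `f̃²`, dominated by `f̃² / D₁` because `μ > 2 D₁ γ / β`,
and a multiple of `‖α‖² ‖u‖² ≤ 2 ‖α‖² (‖u + k z‖² + k² ‖z‖²)`, absorbed by the `μ ‖α‖²` part of `𝒩`.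
For `λ = η (1 / D₁ - 2γ / (βμ))` this leaves `V̇ ≤ -D` with `D` a positive definite quadratic form
in `(s, f̃, u + k z, z)`. So `V` stays bounded, which bounds `s, v̂, â, ā`; integrating gives
`∫ D ≤ V 0`, which is the `L²` part; and since `ṡ` is bounded, Barbalat's lemma turns `s ∈ L²`
into `s → 0`.
-/

open MeasureTheory Filter
open scoped RealInnerProductSpace ENNReal

noncomputable section

/-- The signal `g` is square-integrable (`L²`) on `[0, ∞)`. -/
def InL2 {F : Type*} [NormedAddCommGroup F] (g : ℝ → F) : Prop :=
  ∫⁻ t in Set.Ici (0 : ℝ), ENNReal.ofReal (‖g t‖ ^ 2) < ⊤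

/-- The signal `g` is bounded (`L∞`) on `[0, ∞)`. -/
def InLinf {F : Type*} [NormedAddCommGroup F] (g : ℝ → F) : Prop :=
  ∃ C : ℝ, ∀ t : ℝ, 0 ≤ t → ‖g t‖ ≤ C

open Set Topology

section Signals

variable {F : Type*} [NormedAddCommGroup F] {f g : ℝ → F}

theorem inLinf_const (c : F) : InLinf fun _ : ℝ => c :=
  ⟨‖c‖, fun _ _ => le_rfl⟩

theorem InLinf.add (hf : InLinf f) (hg : InLinf g) : InLinf fun t => f t + g t := by
  obtain ⟨C, hC⟩ := hf
  obtain ⟨D, hD⟩ := hg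
  exact ⟨C + D, fun t ht => (norm_add_le _ _).trans (add_le_add (hC t ht) (hD t ht))⟩

theorem InLinf.sub (hf : InLinf f) (hg : InLinf g) : InLinf fun t => f t - g t := by
  obtain ⟨C, hC⟩ := hf
  obtain ⟨D, hD⟩ := hg
  exact ⟨C + D, fun t ht => (norm_sub_le _ _).trans (add_le_add (hC t ht) (hD t ht))⟩

theorem InLinf.const_mul {f : ℝ → ℝ} (c : ℝ) (hf : InLinf f) : InLinf fun t => c * f t := by
  obtain ⟨C, hC⟩ := hf
  exact ⟨|c| * C, fun t ht => by
    rw [norm_mul, Real.norm_eq_abs]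
    exact mul_le_mul_of_nonneg_left (hC t ht) (abs_nonneg c)⟩

theorem InLinf.of_sq_le {B : ℝ} (h : ∀ t, 0 ≤ t → ‖g t‖ ^ 2 ≤ B) : InLinf g :=
  ⟨√B, fun t ht => Real.le_sqrt_of_sq_le (h t ht)⟩

theorem InL2.of_mul_sq_le {D : ℝ → ℝ} {c : ℝ} (hc : 0 < c)
    (hD : ∫⁻ t in Ici 0, ENNReal.ofReal (D t) ≠ ∞) (h : ∀ t, 0 ≤ t → c * ‖g t‖ ^ 2 ≤ D t) :
    InL2 g :=
  calc ∫⁻ t in Ici 0, ENNReal.ofReal (‖g t‖ ^ 2)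
      ≤ ∫⁻ t in Ici 0, ENNReal.ofReal c⁻¹ * ENNReal.ofReal (D t) :=
        setLIntegral_mono' measurableSet_Ici fun t ht => by
          rw [← ENNReal.ofReal_mul (inv_nonneg.2 hc.le), inv_mul_eq_div]
          exact ENNReal.ofReal_le_ofReal ((le_div_iff₀' hc).2 (h t ht))
    _ = ENNReal.ofReal c⁻¹ * ∫⁻ t in Ici 0, ENNReal.ofReal (D t) :=
        lintegral_const_mul' _ _ ENNReal.ofReal_ne_top
    _ < ⊤ := ENNReal.mul_lt_top ENNReal.ofReal_lt_top hD.lt_top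

end Signals

theorem tendsto_setLIntegral_Ici_atTop_zero {f : ℝ → ℝ≥0∞} {a : ℝ}
    (hf : ∫⁻ t in Ici a, f t ≠ ∞) :
    Tendsto (fun T => ∫⁻ t in Ici T, f t) atTop (𝓝 0) := by
  have h := tendsto_measure_iInter_atTop (μ := volume.withDensity f)
    (fun T => measurableSet_Ici.nullMeasurableSet) antitone_Ici
    ⟨a, by rwa [withDensity_apply _ measurableSet_Ici]⟩
  have hempty : (⋂ T : ℝ, Ici T) = ∅ :=
    eq_empty_of_forall_notMem fun t ht => absurd (mem_iInter.1 ht (t + 1)) (by simp)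
  rw [hempty, measure_empty] at h
  exact h.congr fun T => withDensity_apply _ measurableSet_Ici

theorem tendsto_atTop_zero_of_lintegral_ne_top {g g' : ℝ → ℝ} {K : ℝ}
    (hg : ∀ t, 0 ≤ t → HasDerivAt g (g' t) t) (hg' : ∀ t, 0 ≤ t → |g' t| ≤ K)
    (hg0 : ∀ t, 0 ≤ t → 0 ≤ g t) (hint : ∫⁻ t in Ici 0, ENNReal.ofReal (g t) ≠ ∞) :
    Tendsto g atTop (𝓝 0) := by
  have hK : 0 ≤ K := (abs_nonneg _).trans (hg' 0 le_rfl)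
  have hlip : ∀ t τ, 0 ≤ t → t ≤ τ → g t - K * (τ - t) ≤ g τ := by
    intro t τ ht htτ
    have := (convex_Ici (0 : ℝ)).norm_image_sub_le_of_norm_hasDerivWithin_le
      (fun u hu => (hg u hu).hasDerivWithinAt) (fun u hu => hg' u hu) ht (ht.trans htτ)
    rw [Real.norm_eq_abs, Real.norm_eq_abs, abs_of_nonneg (sub_nonneg.2 htτ)] at this
    linarith [neg_abs_le (g τ - g t)]
  refine tendsto_order.2 ⟨fun b hb => eventually_atTop.2 ⟨0, fun t ht => hb.trans_le (hg0 t ht)⟩,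
    fun ε hε => ?_⟩
  set δ := ε / (2 * (K + 1))
  have hδ : 0 < δ := by positivity
  have hKδ : K * δ ≤ ε / 2 := by
    rw [mul_div_assoc', div_le_div_iff₀ (by positivity) two_pos]
    nlinarith
  filter_upwards [(tendsto_setLIntegral_Ici_atTop_zero hint).eventually
    (gt_mem_nhds (ENNReal.ofReal_pos.2 (mul_pos hδ (half_pos hε)))), eventually_ge_atTop 0]
    with t ht ht0
  have hlow : ENNReal.ofReal ((g t - ε / 2) * δ) ≤ ∫⁻ τ in Ici t, ENNReal.ofReal (g τ) :=
    calc ENNReal.ofReal ((g t - ε / 2) * δ)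
        = ∫⁻ _ in Icc t (t + δ), ENNReal.ofReal (g t - ε / 2) := by
          rw [setLIntegral_const, Real.volume_Icc, add_sub_cancel_left, ENNReal.ofReal_mul' hδ.le]
      _ ≤ ∫⁻ τ in Icc t (t + δ), ENNReal.ofReal (g τ) :=
          setLIntegral_mono' measurableSet_Icc fun τ hτ => ENNReal.ofReal_le_ofReal <| by
            nlinarith [hlip t τ ht0 hτ.1, hτ.2]
      _ ≤ ∫⁻ τ in Ici t, ENNReal.ofReal (g τ) := lintegral_mono_set Icc_subset_Ici_self
  have := (ENNReal.ofReal_lt_ofReal_iff (by positivity)).1 (hlow.trans_lt ht)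
  nlinarith

theorem lintegral_le_of_hasDerivAt_le_neg {V V' D : ℝ → ℝ}
    (hV : ∀ t, 0 ≤ t → HasDerivAt V (V' t) t) (hV' : ∀ t, 0 ≤ t → V' t ≤ -D t)
    (hD : ∀ t, 0 ≤ t → 0 ≤ D t) (hV0 : ∀ t, 0 ≤ t → 0 ≤ V t) :
    ∫⁻ t in Ici 0, ENNReal.ofReal (D t) ≤ ENNReal.ofReal (V 0) := by
  have hIci : Ici (0 : ℝ) = ⋃ n : ℕ, Icc 0 (n : ℝ) :=
    ext fun t => ⟨fun ht => mem_iUnion.2 ⟨⌈t⌉₊, ht, Nat.le_ceil t⟩,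
      fun ht => (mem_iUnion.1 ht).elim fun _ h => h.1⟩
  rw [hIci, setLIntegral_iUnion_of_directed _
    (Monotone.directed_le fun m n h => Icc_subset_Icc_right (Nat.cast_le.2 h))]
  have hV'_nonneg : ∀ t, 0 ≤ t → 0 ≤ -V' t := fun t ht => by linarith [hV' t ht, hD t ht]
  refine iSup_le fun n => ?_
  have hn : (0 : ℝ) ≤ n := n.cast_nonneg
  -- `-V'` is a nonnegative derivative, hence integrable on compact intervals
  have hint : IntegrableOn (fun t => -V' t) (Icc 0 n) := by
    rw [integrableOn_Icc_iff_integrableOn_Ioc]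
    exact intervalIntegral.integrableOn_deriv_of_nonneg
      (fun t ht => (hV t ht.1).neg.continuousAt.continuousWithinAt)
      (fun t ht => (hV t ht.1.le).neg) fun t ht => hV'_nonneg t ht.1.le
  calc ∫⁻ t in Icc 0 (n : ℝ), ENNReal.ofReal (D t)
      ≤ ∫⁻ t in Icc 0 (n : ℝ), ENNReal.ofReal (-V' t) :=
        setLIntegral_mono' measurableSet_Icc fun t ht => ENNReal.ofReal_le_ofReal (by
          linarith [hV' t ht.1])
    _ = ENNReal.ofReal (V 0 - V n) := by
        rw [← ofReal_integral_eq_lintegral_ofReal hint (ae_restrict_of_forall_mem measurableSet_Icc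
            fun t ht => hV'_nonneg t ht.1), integral_Icc_eq_integral_Ioc,
          ← intervalIntegral.integral_of_le hn, intervalIntegral.integral_neg,
          intervalIntegral.integral_eq_sub_of_hasDerivAt_of_le hn
            (fun t ht => (hV t ht.1).continuousAt.continuousWithinAt)
            (fun t ht => hV t ht.1.le) ((intervalIntegrable_iff_integrableOn_Icc_of_le hn).2
              (by simpa using hint.neg)), neg_sub]
    _ ≤ ENNReal.ofReal (V 0) := ENNReal.ofReal_le_ofReal (by linarith [hV0 n hn])

theorem tendsto_atTop_zero_of_inL2 {s d : ℝ → ℝ} (hs : ∀ t, 0 ≤ t → HasDerivAt s (d t) t)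
    (hs_bdd : InLinf s) (hd_bdd : InLinf d) (hs_L2 : InL2 s) : Tendsto s atTop (𝓝 0) := by
  obtain ⟨C, hC⟩ := hs_bdd
  obtain ⟨L, hL⟩ := hd_bdd
  have hsq : Tendsto (fun t => s t ^ 2) atTop (𝓝 0) := by
    refine tendsto_atTop_zero_of_lintegral_ne_top (g' := fun t => 2 * s t * d t) (K := 2 * C * L)
      (fun t ht => by simpa using (hs t ht).fun_pow 2) (fun t ht => ?_) (fun t _ => sq_nonneg _)
      (by simpa only [InL2, Real.norm_eq_abs, sq_abs] using hs_L2.ne)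
    rw [abs_mul, abs_mul, abs_two, mul_assoc, mul_assoc]
    exact mul_le_mul_of_nonneg_left (mul_le_mul (hC t ht) (hL t ht) (abs_nonneg _)
      ((abs_nonneg _).trans (hC t ht))) zero_le_two
  exact (tendsto_zero_iff_abs_tendsto_zero s).2 <| by
    simpa [Function.comp_def, Real.sqrt_sq_eq_abs] using hsq.sqrt

theorem sq_le_mul_of_nonneg_of_abs_le {D₁ F P : ℝ} (hD₁ : 0 < D₁) (h₁ : 0 ≤ P * F)
    (h₂ : 1 / D₁ * |F| ≤ |P|) : F ^ 2 ≤ D₁ * (P * F) := by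
  have hF : |F| ≤ D₁ * |P| := by rwa [one_div_mul_eq_div, div_le_iff₀' hD₁] at h₂
  calc F ^ 2 = |F| * |F| := by rw [← sq_abs, sq]
    _ ≤ D₁ * |P| * |F| := mul_le_mul_of_nonneg_right hF (abs_nonneg F)
    _ = D₁ * (P * F) := by rw [mul_assoc, ← abs_mul, abs_of_nonneg h₁]

theorem elastic_dissipation_le {lam η γ β μ D₁ s F M X nA Q : ℝ}
    (hη : 0 < η) (hγ : 0 < γ) (hβ : 0 < β) (hμ : 0 < μ) (hD₁ : 0 < D₁) (hlam : 0 ≤ lam)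
    (hlam' : lam / η + 2 * γ / (β * μ) ≤ 1 / D₁)
    (hM : F ^ 2 ≤ D₁ * M) (hX : X ^ 2 ≤ 2 * Q * nA ^ 2) :
    lam * s * (-η * s + F) - M - 2 * F * X - β * (1 + μ * nA ^ 2) / γ * Q
      ≤ -(η * lam / 2 * s ^ 2 + lam / (2 * η) * F ^ 2 + β / γ * Q) := by
  -- the Young weight `θ` is chosen so that `X ^ 2 / θ` is absorbed by the `μ`-part of `𝒩 / γ`
  set θ := 2 * γ / (β * μ) with hθ
  have hθ0 : 0 < θ := by positivity
  have hmono : 1 / D₁ * F ^ 2 ≤ M := by rwa [one_div_mul_eq_div, div_le_iff₀' hD₁]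
  have hyoung : -(2 * F * X) ≤ θ * F ^ 2 + X ^ 2 / θ := by
    have h : (θ * F + X) ^ 2 / θ = θ * F ^ 2 + 2 * F * X + X ^ 2 / θ := by field_simp; ring
    linarith [div_nonneg (sq_nonneg (θ * F + X)) hθ0.le]
  have hcross : X ^ 2 / θ ≤ β * μ / γ * nA ^ 2 * Q := by
    rw [div_le_iff₀ hθ0, hθ]
    field_simp
    nlinarith
  have hs : lam * s * F ≤ η * lam / 2 * s ^ 2 + lam / (2 * η) * F ^ 2 := by
    have h : lam / (2 * η) * (η * s - F) ^ 2
        = η * lam / 2 * s ^ 2 + lam / (2 * η) * F ^ 2 - lam * s * F := by field_simp; ring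
    linarith [mul_nonneg (div_nonneg hlam (by positivity : (0:ℝ) ≤ 2 * η)) (sq_nonneg (η * s - F))]
  have hF : 0 ≤ (1 / D₁ - θ - lam / η) * F ^ 2 := mul_nonneg (by linarith) (sq_nonneg F)
  linear_combination hmono + hyoung + hcross + hs + hF

section ElasticAdaptation

variable {E : Type*} [NormedAddCommGroup E]

def elasticLyapunov (lam γ k : ℝ) (a : E) (s : ℝ) (v ah ab : E) : ℝ :=
  lam / 2 * s ^ 2 + (‖v - a‖ ^ 2 + ‖v - ah‖ ^ 2 + k * ‖ab - ah‖ ^ 2) / (2 * γ)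

variable {s F : ℝ → ℝ} {A v ah ab : ℝ → E} {a : E} {lam η γ β μ k D₁ : ℝ}

theorem inLinf_of_elasticLyapunov_le {B : ℝ} (hγ : 0 < γ) (hk : 0 < k) (hlam : 0 < lam)
    (hV : ∀ t, 0 ≤ t → elasticLyapunov lam γ k a (s t) (v t) (ah t) (ab t) ≤ B) :
    InLinf s ∧ InLinf v ∧ InLinf ah ∧ InLinf ab := by
  have hbound : ∀ t, 0 ≤ t → ‖s t‖ ^ 2 ≤ 2 * B / lam ∧ ‖v t - a‖ ^ 2 ≤ 2 * γ * B ∧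
      ‖v t - ah t‖ ^ 2 ≤ 2 * γ * B ∧ ‖ab t - ah t‖ ^ 2 ≤ 2 * γ * B / k := by
    intro t ht
    have h := hV t ht
    simp only [elasticLyapunov] at h
    have hs : 0 ≤ lam / 2 * s t ^ 2 := by positivity
    have hsum : ‖v t - a‖ ^ 2 + ‖v t - ah t‖ ^ 2 + k * ‖ab t - ah t‖ ^ 2 ≤ 2 * γ * B := by
      rw [← div_le_iff₀' (by positivity)]
      linarith [hs]
    have hva : 0 ≤ ‖v t - a‖ ^ 2 := by positivity
    have hu : 0 ≤ ‖v t - ah t‖ ^ 2 := by positivity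
    have hz : 0 ≤ k * ‖ab t - ah t‖ ^ 2 := by positivity
    have hV : 0 ≤ (‖v t - a‖ ^ 2 + ‖v t - ah t‖ ^ 2 + k * ‖ab t - ah t‖ ^ 2) / (2 * γ) := by
      positivity
    rw [Real.norm_eq_abs, sq_abs, le_div_iff₀ hlam, le_div_iff₀' hk]
    exact ⟨by linarith, by linarith, by linarith, by linarith⟩
  have hs := InLinf.of_sq_le fun t ht => (hbound t ht).1
  have hv : InLinf v := by
    simpa using (InLinf.of_sq_le fun t ht => (hbound t ht).2.1).add (inLinf_const a)
  have hah : InLinf ah := by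
    simpa using hv.sub (InLinf.of_sq_le fun t ht => (hbound t ht).2.2.1)
  have hab : InLinf ab := by
    simpa using hah.add (InLinf.of_sq_le fun t ht => (hbound t ht).2.2.2)
  exact ⟨hs, hv, hah, hab⟩

variable [InnerProductSpace ℝ E]

theorem norm_sq_le_two_mul_norm_add_smul_sq_add (u z : E) (k : ℝ) :
    ‖u‖ ^ 2 ≤ 2 * (‖u + k • z‖ ^ 2 + k ^ 2 * ‖z‖ ^ 2) := by
  have h : ‖u‖ ≤ ‖u + k • z‖ + |k| * ‖z‖ :=
    calc ‖u‖ = ‖(u + k • z) - k • z‖ := by rw [add_sub_cancel_right]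
      _ ≤ ‖u + k • z‖ + ‖k • z‖ := norm_sub_le _ _
      _ = ‖u + k • z‖ + |k| * ‖z‖ := by rw [norm_smul, Real.norm_eq_abs]
  nlinarith [sq_abs k, norm_nonneg u, sq_nonneg (‖u + k • z‖ - |k| * ‖z‖)]

def elasticDissipation (lam η γ β k : ℝ) (s F : ℝ) (u z : E) : ℝ :=
  η * lam / 2 * s ^ 2 + lam / (2 * η) * F ^ 2 + β / γ * (‖u + k • z‖ ^ 2 + k ^ 2 * ‖z‖ ^ 2)

theorem hasDerivAt_elasticLyapunov {s : ℝ → ℝ} {v ah ab : ℝ → E} {a A : E}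
    {lam η γ k N F t : ℝ} (hγ : γ ≠ 0)
    (hs : HasDerivAt s (-η * s t + F) t) (hv : HasDerivAt v (-((γ * F) • A)) t)
    (ha : HasDerivAt ah (N • (v t - ah t) + (k * N) • (ab t - ah t)) t)
    (hb : HasDerivAt ab ((k * N) • (ah t - ab t)) t) :
    HasDerivAt (fun t => elasticLyapunov lam γ k a (s t) (v t) (ah t) (ab t))
      (lam * s t * (-η * s t + F) - ⟪ah t - a, A⟫ * F - 2 * F * ⟪v t - ah t, A⟫
        - N / γ * (‖v t - ah t + k • (ab t - ah t)‖ ^ 2 + k ^ 2 * ‖ab t - ah t‖ ^ 2)) t := by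
  refine (((hs.pow 2).const_mul (lam / 2)).add
    ((((hv.sub_const a).norm_sq.add (hv.sub ha).norm_sq).add
      ((hb.sub ha).norm_sq.const_mul k)).div_const (2 * γ))).congr_deriv ?_
  have hva : v t - a = (ah t - a) + (v t - ah t) := by abel
  have hba : ah t - ab t = -(ab t - ah t) := by abel
  simp only [Pi.sub_apply]
  rw [hva, hba]
  set u := v t - ah t
  set z := ab t - ah t
  simp only [inner_add_left, inner_add_right, inner_sub_right, inner_neg_right,
    real_inner_smul_right, norm_add_sq_real, norm_smul, real_inner_comm z u, Real.norm_eq_abs,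
    mul_pow, sq_abs, real_inner_self_eq_norm_sq]
  field_simp
  ring

theorem elasticLyapunov_energy_estimate (hη : 0 < η) (hγ : 0 < γ) (hβ : 0 < β) (hμ : 0 < μ)
    (hk : 0 < k) (hD₁ : 0 < D₁) (hlam : 0 < lam) (hlam' : lam / η + 2 * γ / (β * μ) ≤ 1 / D₁)
    (hmono : ∀ t, 0 ≤ t → F t ^ 2 ≤ D₁ * (⟪ah t - a, A t⟫ * F t))
    (hs : ∀ t, 0 ≤ t → HasDerivAt s (-η * s t + F t) t)
    (hv : ∀ t, 0 ≤ t → HasDerivAt v (-((γ * F t) • A t)) t)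
    (ha : ∀ t, 0 ≤ t → HasDerivAt ah ((β * (1 + μ * ‖A t‖ ^ 2)) • (v t - ah t) +
      (k * (β * (1 + μ * ‖A t‖ ^ 2))) • (ab t - ah t)) t)
    (hb : ∀ t, 0 ≤ t → HasDerivAt ab ((k * (β * (1 + μ * ‖A t‖ ^ 2))) • (ah t - ab t)) t) :
    (∀ t, 0 ≤ t → elasticLyapunov lam γ k a (s t) (v t) (ah t) (ab t)
        ≤ elasticLyapunov lam γ k a (s 0) (v 0) (ah 0) (ab 0)) ∧
      ∫⁻ t in Ici 0, ENNReal.ofReal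
        (elasticDissipation lam η γ β k (s t) (F t) (v t - ah t) (ab t - ah t)) ≠ ∞ := by
  set V := fun t => elasticLyapunov lam γ k a (s t) (v t) (ah t) (ab t)
  set D := fun t => elasticDissipation lam η γ β k (s t) (F t) (v t - ah t) (ab t - ah t)
  have hdecay : ∀ t, 0 ≤ t → ∃ V', HasDerivAt V V' t ∧ V' ≤ -D t := by
    intro t ht
    have hcross : ⟪v t - ah t, A t⟫ ^ 2 ≤ 2 * (‖v t - ah t + k • (ab t - ah t)‖ ^ 2
        + k ^ 2 * ‖ab t - ah t‖ ^ 2) * ‖A t‖ ^ 2 := by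
      have hX := abs_real_inner_le_norm (v t - ah t) (A t)
      have hu := norm_sq_le_two_mul_norm_add_smul_sq_add (v t - ah t) (ab t - ah t) k
      rw [← sq_abs]
      nlinarith [abs_nonneg ⟪v t - ah t, A t⟫, norm_nonneg (A t), norm_nonneg (v t - ah t)]
    exact ⟨_, hasDerivAt_elasticLyapunov hγ.ne' (hs t ht) (hv t ht) (ha t ht) (hb t ht),
      elastic_dissipation_le hη hγ hβ hμ hD₁ hlam.le hlam' (hmono t ht) hcross⟩
  choose! V' hV hV'D using hdecay
  have hD : ∀ t, 0 ≤ D t := fun t => by simp only [D, elasticDissipation]; positivity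
  have hV0 : ∀ t, 0 ≤ V t := fun t => by simp only [V, elasticLyapunov]; positivity
  refine ⟨fun t ht => ?_, ne_top_of_le_ne_top ENNReal.ofReal_ne_top
    (lintegral_le_of_hasDerivAt_le_neg hV hV'D (fun t _ => hD t) (fun t _ => hV0 t))⟩
  refine antitoneOn_of_hasDerivWithinAt_nonpos (convex_Ici 0)
    (fun t ht => (hV t ht).continuousAt.continuousWithinAt)
    (fun t ht => (hV t (interior_subset ht)).hasDerivWithinAt)
    (fun t ht => by linarith [hV'D t (interior_subset ht), hD t])
    self_mem_Ici ht ht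

theorem inL2_of_elasticDissipation (hη : 0 < η) (hγ : 0 < γ) (hβ : 0 < β) (hk : 0 < k)
    (hlam : 0 < lam)
    (hD : ∫⁻ t in Ici 0, ENNReal.ofReal
      (elasticDissipation lam η γ β k (s t) (F t) (v t - ah t) (ab t - ah t)) ≠ ∞) :
    InL2 F ∧ InL2 s ∧ InL2 (fun t => ah t - v t) ∧ InL2 (fun t => ah t - ab t) := by
  have hs : ∀ t, 0 ≤ η * lam / 2 * s t ^ 2 := fun t => by positivity
  have hF : ∀ t, 0 ≤ lam / (2 * η) * F t ^ 2 := fun t => by positivity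
  set Q := fun t => ‖v t - ah t + k • (ab t - ah t)‖ ^ 2 + k ^ 2 * ‖ab t - ah t‖ ^ 2
  have hQ : ∀ t, 0 ≤ β / γ * Q t := fun t => by positivity
  have hu : ∀ t, β / (2 * γ) * ‖ah t - v t‖ ^ 2 ≤ β / γ * Q t := fun t => by
    rw [norm_sub_rev]
    calc β / (2 * γ) * ‖v t - ah t‖ ^ 2 ≤ β / (2 * γ) * (2 * Q t) :=
          mul_le_mul_of_nonneg_left (norm_sq_le_two_mul_norm_add_smul_sq_add _ _ k) (by positivity)
      _ = β / γ * Q t := by field_simp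
  have hz : ∀ t, β / γ * k ^ 2 * ‖ah t - ab t‖ ^ 2 ≤ β / γ * Q t := fun t => by
    rw [norm_sub_rev, mul_assoc]
    exact mul_le_mul_of_nonneg_left (le_add_of_nonneg_left (by positivity)) (by positivity)
  refine ⟨.of_mul_sq_le (c := lam / (2 * η)) (by positivity) hD fun t _ => ?_,
    .of_mul_sq_le (c := η * lam / 2) (by positivity) hD fun t _ => ?_,
    .of_mul_sq_le (c := β / (2 * γ)) (by positivity) hD fun t _ => ?_,
    .of_mul_sq_le (c := β / γ * k ^ 2) (by positivity) hD fun t _ => ?_⟩ <;>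
    simp only [elasticDissipation, Real.norm_eq_abs, sq_abs]
  · linarith [hs t, hQ t]
  · linarith [hF t, hQ t]
  · linarith [hs t, hF t, hu t]
  · linarith [hs t, hF t, hz t]

theorem elastic_adaptation_bounded_and_inL2 (hη : 0 < η) (hγ : 0 < γ) (hβ : 0 < β) (hk : 0 < k)
    (hD₁ : 0 < D₁) (hμ : 2 * D₁ * γ < β * μ)
    (hmono : ∀ t, 0 ≤ t → F t ^ 2 ≤ D₁ * (⟪ah t - a, A t⟫ * F t))
    (hs : ∀ t, 0 ≤ t → HasDerivAt s (-η * s t + F t) t)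
    (hv : ∀ t, 0 ≤ t → HasDerivAt v (-((γ * F t) • A t)) t)
    (ha : ∀ t, 0 ≤ t → HasDerivAt ah ((β * (1 + μ * ‖A t‖ ^ 2)) • (v t - ah t) +
      (k * (β * (1 + μ * ‖A t‖ ^ 2))) • (ab t - ah t)) t)
    (hb : ∀ t, 0 ≤ t → HasDerivAt ab ((k * (β * (1 + μ * ‖A t‖ ^ 2))) • (ah t - ab t)) t) :
    (InLinf s ∧ InLinf v ∧ InLinf ah ∧ InLinf ab) ∧
      (InL2 F ∧ InL2 s ∧ InL2 (fun t => ah t - v t) ∧ InL2 (fun t => ah t - ab t)) := by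
  have hμ0 : 0 < μ := pos_of_mul_pos_right ((by positivity : 0 < 2 * D₁ * γ).trans hμ) hβ.le
  have hθ : 2 * γ / (β * μ) < 1 / D₁ := by
    rw [div_lt_div_iff₀ (by positivity) hD₁]
    linarith
  set lam := η * (1 / D₁ - 2 * γ / (β * μ))
  have hlam : 0 < lam := mul_pos hη (sub_pos.2 hθ)
  have hlam' : lam / η + 2 * γ / (β * μ) ≤ 1 / D₁ := by
    rw [mul_div_cancel_left₀ _ hη.ne']
    linarith
  obtain ⟨hV, hD⟩ :=
    elasticLyapunov_energy_estimate hη hγ hβ hμ0 hk hD₁ hlam hlam' hmono hs hv ha hb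
  exact ⟨inLinf_of_elasticLyapunov_le hγ hk hlam hV, inL2_of_elasticDissipation hη hγ hβ hk hlam hD⟩

end ElasticAdaptation

/-- momentum-plus-elastic adaptation law for nonlinearly
parameterized dynamics under the monotonicity assumption. -/
theorem momentum_elastic_adaptation_nonlinear
    {n p : ℕ}
    (x xd : ℝ → EuclideanSpace ℝ (Fin n))
    (s : ℝ → ℝ)
    (f : EuclideanSpace ℝ (Fin n) → EuclideanSpace ℝ (Fin p) → ℝ → ℝ)
    (α : EuclideanSpace ℝ (Fin n) → ℝ → EuclideanSpace ℝ (Fin p))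
    (a : EuclideanSpace ℝ (Fin p))
    (ahat vhat abar : ℝ → EuclideanSpace ℝ (Fin p))
    (η γ β μ k D₁ : ℝ)
    (hη : 0 < η) (hγ : 0 < γ) (hβ : 0 < β) (hD₁ : 0 < D₁)
    (hk₁ : 1 / 3 ≤ k) (hk₂ : k < 1)
    (hμ : 2 * D₁ * γ / (β * (1 - k)) < μ)
    -- monotonicity assumption
    (hmono₁ : ∀ (b : EuclideanSpace ℝ (Fin p)) (ξ : EuclideanSpace ℝ (Fin n)) (t : ℝ),
      0 ≤ t → 0 ≤ ⟪b - a, α ξ t⟫ * (f ξ b t - f ξ a t))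
    (hmono₂ : ∀ (b : EuclideanSpace ℝ (Fin p)) (ξ : EuclideanSpace ℝ (Fin n)) (t : ℝ),
      0 ≤ t → (1 / D₁) * |f ξ b t - f ξ a t| ≤ |⟪α ξ t, b - a⟫|)
    -- error dynamics ṡ = -η s + f̃
    (hs : ∀ t, 0 ≤ t →
      HasDerivAt s (-η * s t + (f (x t) (ahat t) t - f (x t) a t)) t)
    -- momentum-plus-elastic adaptation law, 𝒩(t) = 1 + μ‖α(x(t), t)‖²
    (hv : ∀ t, 0 ≤ t →
      HasDerivAt vhat
        (-((γ * (f (x t) (ahat t) t - f (x t) a t)) • α (x t) t)) t)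
    (ha : ∀ t, 0 ≤ t →
      HasDerivAt ahat
        ((β * (1 + μ * ‖α (x t) t‖ ^ 2)) • (vhat t - ahat t) +
          (k * (β * (1 + μ * ‖α (x t) t‖ ^ 2))) • (abar t - ahat t)) t)
    (hb : ∀ t, 0 ≤ t →
      HasDerivAt abar
        ((k * (β * (1 + μ * ‖α (x t) t‖ ^ 2))) • (ahat t - abar t)) t)
    -- f̃ is locally bounded in (x, â) uniformly in t
    (hfloc : ∀ R : ℝ, ∃ M : ℝ,
      ∀ (ξ : EuclideanSpace ℝ (Fin n)) (b : EuclideanSpace ℝ (Fin p)) (t : ℝ),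
        0 ≤ t → ‖ξ‖ ≤ R → ‖b‖ ≤ R → |f ξ b t - f ξ a t| ≤ M)
    -- boundedness of s implies boundedness of x
    (hsx : InLinf s → InLinf x)
    -- s → 0 implies x → x_d
    (hxd : Tendsto s atTop (nhds 0) →
      Tendsto (fun t => x t - xd t) atTop (nhds 0)) :
    InLinf x ∧ InLinf ahat ∧ InLinf vhat ∧ InLinf abar ∧
    (InL2 (fun t => f (x t) (ahat t) t - f (x t) a t) ∧
      InLinf (fun t => f (x t) (ahat t) t - f (x t) a t)) ∧
    (InL2 s ∧ InLinf s) ∧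
    InL2 (fun t => ahat t - vhat t) ∧
    InL2 (fun t => ahat t - abar t) ∧
    Tendsto s atTop (nhds 0) ∧
    Tendsto (fun t => x t - xd t) atTop (nhds 0) := by
  have hk : 0 < k := by linarith
  have hμ' : 2 * D₁ * γ < β * μ := by
    have h1k : 0 < β * (1 - k) := mul_pos hβ (by linarith)
    have hμ0 : 0 < μ := (div_pos (by positivity) h1k).trans hμ
    rw [div_lt_iff₀ h1k] at hμ
    nlinarith [mul_pos (mul_pos hμ0 hβ) hk]
  obtain ⟨⟨hs_bdd, hv_bdd, ha_bdd, hb_bdd⟩, hF_L2, hs_L2, hu_L2, hz_L2⟩ :=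
    elastic_adaptation_bounded_and_inL2 (A := fun t => α (x t) t) hη hγ hβ hk hD₁ hμ'
      (fun t ht => sq_le_mul_of_nonneg_of_abs_le hD₁ (hmono₁ (ahat t) (x t) t ht)
        (by simpa only [real_inner_comm] using hmono₂ (ahat t) (x t) t ht)) hs hv ha hb
  have hx_bdd := hsx hs_bdd
  have hF_bdd : InLinf fun t => f (x t) (ahat t) t - f (x t) a t := by
    obtain ⟨Cx, hCx⟩ := hx_bdd
    obtain ⟨Ca, hCa⟩ := ha_bdd
    obtain ⟨M, hM⟩ := hfloc (max Cx Ca)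
    exact ⟨M, fun t ht => hM (x t) (ahat t) t ht ((hCx t ht).trans (le_max_left _ _))
      ((hCa t ht).trans (le_max_right _ _))⟩
  have hs_lim := tendsto_atTop_zero_of_inL2 hs hs_bdd ((hs_bdd.const_mul (-η)).add hF_bdd) hs_L2
  exact ⟨hx_bdd, ha_bdd, hv_bdd, hb_bdd, ⟨hF_L2, hF_bdd⟩, ⟨hs_L2, hs_bdd⟩, hu_L2, hz_L2, hs_lim,
    hxd hs_lim⟩

end
end

section
/- Consider the linearly parameterized error dynamics ṡ = −η s + Y(t)(â − a) with η > 0, together with the composite adaptation law with bounded-gain-forgetting learning rate: â̇ = −P(t) Y(t)ᵀ(s + Y(t)(â − a)), where P(t) is a symmetric positive definite matrix-valued signal satisfying (d/dt) P(t)⁻¹ = −λ(t) P(t)⁻¹ + Y(t)ᵀY(t) with forgetting factor λ(t) = λ₀(1 − ‖P(t)‖/P₀) ≥ 0, λ₀ > 0, P₀ > 0, which keeps ‖P(t)‖ ≤ P₀. Then all trajectories (x, â) remain bounded, f̃ = Y(â − a) ∈ L² ∩ L∞, s ∈ L² ∩ L∞, s(t) → 0 as t → ∞, and x(t) → x_d(t).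 -/
open MeasureTheory Filter
open scoped RealInnerProductSpace ENNReal

noncomputable section

/-- The rank-one operator `v vᵀ` on Euclidean space, `w ↦ ⟪v, w⟫ v`. -/
def rankOne {p : ℕ} (v : EuclideanSpace ℝ (Fin p)) :
    EuclideanSpace ℝ (Fin p) →L[ℝ] EuclideanSpace ℝ (Fin p) :=
  (innerSL ℝ v).smulRight v

/-!
With `b = â - a` and `Q = P⁻¹`, the function `V = s² + bᵀ Q b` satisfies
`V̇ = -(2η s² + f̃² + λ bᵀ Q b) ≤ 0` along the closed loop, since `λ ≥ 0`. Hence `V` is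
nonincreasing, which bounds `s`, and bounds `b` through `‖b‖² ≤ ‖P‖ bᵀ Q b ≤ P₀ V(0)`;
integrating `V̇` bounds `∫ s²` and `∫ f̃²`. Finally `ṡ = -η s + f̃` is also square integrable,
so `(s²)' = 2 s ṡ` is integrable, and an integrable function with integrable derivative tends
to `0`.
-/

open Set
open scoped Topology

namespace ContinuousLinearMap

variable {E : Type*} [NormedAddCommGroup E] [InnerProductSpace ℝ E] {T : E →L[ℝ] E}

theorem isPositive_of_inner_pos (hsym : ∀ v w, ⟪T v, w⟫ = ⟪v, T w⟫)
    (hpos : ∀ v, v ≠ 0 → 0 < ⟪v, T v⟫) : T.IsPositive := by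
  refine (isPositive_iff T).2 ⟨hsym, fun v => ?_⟩
  rcases eq_or_ne v 0 with rfl | hv
  · simp
  · exact real_inner_comm v (T v) ▸ (hpos v hv).le

namespace IsPositive

theorem inner_apply_sq_le (hT : T.IsPositive) (u v : E) :
    ⟪u, T v⟫ ^ 2 ≤ ⟪u, T u⟫ * ⟪v, T v⟫ := by
  have hquad : ∀ c : ℝ, 0 ≤ ⟪v, T v⟫ * (c * c) + 2 * ⟪u, T v⟫ * c + ⟪u, T u⟫ := by
    intro c
    have h := hT.inner_nonneg_right (u + c • v)
    have hvu : ⟪v, T u⟫ = ⟪u, T v⟫ := by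
      rw [← hT.inner_left_eq_inner_right, real_inner_comm]
    simp only [map_add, map_smul, inner_add_left, inner_add_right, real_inner_smul_left,
      real_inner_smul_right, hvu] at h
    linarith
  have hdisc := discrim_le_zero hquad
  rw [discrim] at hdisc
  linarith

theorem norm_apply_sq_le (hT : T.IsPositive) (w : E) :
    ‖T w‖ ^ 2 ≤ ‖T‖ * ⟪w, T w⟫ := by
  have hcs := hT.inner_apply_sq_le w (T w)
  rw [← hT.inner_left_eq_inner_right, real_inner_self_eq_norm_sq] at hcs
  have hTT : ⟪T w, T (T w)⟫ ≤ ‖T‖ * ‖T w‖ ^ 2 :=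
    calc ⟪T w, T (T w)⟫ ≤ ‖T w‖ * ‖T (T w)‖ := real_inner_le_norm _ _
      _ ≤ ‖T w‖ * (‖T‖ * ‖T w‖) := by gcongr; exact T.le_opNorm _
      _ = ‖T‖ * ‖T w‖ ^ 2 := by ring
  rcases (norm_nonneg (T w)).eq_or_lt with hTw | hTw
  · rw [← hTw]
    simpa using mul_nonneg (norm_nonneg T) (hT.inner_nonneg_right w)
  · have hTw2 : 0 < ‖T w‖ ^ 2 := by positivity
    nlinarith [mul_le_mul_of_nonneg_left hTT (hT.inner_nonneg_right w)]

variable {S : E →L[ℝ] E}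

theorem inner_right_inverse_nonneg (hT : T.IsPositive) (hTS : ∀ v, T (S v) = v) (v : E) :
    0 ≤ ⟪v, S v⟫ := by
  simpa [hTS, real_inner_comm] using hT.inner_nonneg_right (S v)

theorem norm_sq_le_opNorm_mul_inner_right_inverse (hT : T.IsPositive) (hTS : ∀ v, T (S v) = v)
    (v : E) : ‖v‖ ^ 2 ≤ ‖T‖ * ⟪v, S v⟫ := by
  simpa [hTS, real_inner_comm] using hT.norm_apply_sq_le (S v)

end IsPositive

end ContinuousLinearMap

section Signals

variable {F : Type*} [NormedAddCommGroup F]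

theorem inLinf_of_norm_sq_le {g : ℝ → F} {C : ℝ} (h : ∀ t, 0 ≤ t → ‖g t‖ ^ 2 ≤ C) : InLinf g :=
  ⟨√C, fun t ht => by simpa using Real.abs_le_sqrt (h t ht)⟩

theorem InLinf.of_sub_const {g : ℝ → F} {c : F} (h : InLinf fun t => g t - c) : InLinf g := by
  obtain ⟨C, hC⟩ := h
  exact ⟨C + ‖c‖, fun t ht => by linarith [norm_sub_norm_le (g t) c, hC t ht]⟩

theorem InLinf.inner {E : Type*} [NormedAddCommGroup E] [InnerProductSpace ℝ E] {u v : ℝ → E}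
    (hu : InLinf u) (hv : InLinf v) : InLinf fun t => ⟪u t, v t⟫ := by
  obtain ⟨Cu, hCu⟩ := hu
  obtain ⟨Cv, hCv⟩ := hv
  refine ⟨Cu * Cv, fun t ht => (abs_real_inner_le_norm _ _).trans ?_⟩
  exact mul_le_mul (hCu t ht) (hCv t ht) (norm_nonneg _) ((norm_nonneg _).trans (hCu t ht))

theorem inL2_of_integrableOn_sq {g : ℝ → ℝ} (hg : IntegrableOn (fun t => g t ^ 2) (Ioi 0)) :
    InL2 g := by
  simpa only [InL2, Real.norm_eq_abs, sq_abs] using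
    ((integrableOn_Ici_iff_integrableOn_Ioi).2 hg).lintegral_lt_top

end Signals

section RealAnalysis

variable {f f' : ℝ → ℝ} {a : ℝ}

theorem aestronglyMeasurable_of_hasDerivAt {s : Set ℝ} (hs : MeasurableSet s)
    (hf : ∀ x ∈ s, HasDerivAt f (f' x) x) : AEStronglyMeasurable f' (volume.restrict s) :=
  (measurable_deriv f).aestronglyMeasurable.congr <|
    (ae_restrict_iff' hs).2 <| .of_forall fun x hx => (hf x hx).deriv

theorem tendsto_zero_of_hasDerivAt_of_sq_integrableOn_Ioi
    (hf : ∀ x ∈ Ioi a, HasDerivAt f (f' x) x)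
    (hf2 : IntegrableOn (fun x => f x ^ 2) (Ioi a))
    (hf'2 : IntegrableOn (fun x => f' x ^ 2) (Ioi a)) :
    Tendsto f atTop (𝓝 0) := by
  have hderiv_sq : ∀ x ∈ Ioi a, HasDerivAt (fun x => f x ^ 2) (2 * f x * f' x) x :=
    fun x hx => by simpa [mul_comm] using (hf x hx).fun_pow 2
  have hint : IntegrableOn (fun x => 2 * f x * f' x) (Ioi a) := by
    refine (hf2.add hf'2).mono' ?_ (.of_forall fun x => ?_)
    · exact (((HasDerivAt.continuousOn hf).aestronglyMeasurable measurableSet_Ioi).const_mul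
        2).mul (aestronglyMeasurable_of_hasDerivAt measurableSet_Ioi hf)
    · rw [Pi.add_apply, Real.norm_eq_abs, abs_mul, abs_mul, abs_two]
      nlinarith [sq_nonneg (|f x| - |f' x|), sq_abs (f x), sq_abs (f' x)]
  have hsq := tendsto_zero_of_hasDerivAt_of_integrableOn_Ioi hderiv_sq hint hf2
  have habs : Tendsto (fun x => |f x|) atTop (𝓝 0) := by
    simpa [Real.sqrt_sq_eq_abs] using hsq.sqrt
  exact (tendsto_zero_iff_abs_tendsto_zero f).2 habs

variable {D : ℝ → ℝ}

theorem antitoneOn_Ici_of_hasDerivAt_neg (hf : ∀ x ∈ Ici a, HasDerivAt f (-D x) x)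
    (hD : ∀ x ∈ Ici a, 0 ≤ D x) : AntitoneOn f (Ici a) := by
  refine antitoneOn_of_deriv_nonpos (convex_Ici a) (HasDerivAt.continuousOn hf)
    (fun x hx => ?_) (fun x hx => ?_)
  all_goals rw [interior_Ici] at hx
  · exact (hf x (Ioi_subset_Ici_self hx)).differentiableAt.differentiableWithinAt
  · rw [(hf x (Ioi_subset_Ici_self hx)).deriv, neg_nonpos]
    exact hD x (Ioi_subset_Ici_self hx)

theorem integrableOn_Ioi_of_hasDerivAt_neg (hf : ∀ x ∈ Ici a, HasDerivAt f (-D x) x)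
    (hD : ∀ x ∈ Ici a, 0 ≤ D x) (hf0 : ∀ x ∈ Ici a, 0 ≤ f x) : IntegrableOn D (Ioi a) := by
  have hanti : Antitone fun x => f (max a x) := fun x y hxy =>
    antitoneOn_Ici_of_hasDerivAt_neg hf hD (le_max_left a x) (le_max_left a y)
      (max_le_max_left a hxy)
  have hlim : Tendsto f atTop (𝓝 (⨅ x, f (max a x))) := by
    refine (tendsto_atTop_ciInf hanti ⟨0, ?_⟩).congr' ?_
    · rintro _ ⟨x, rfl⟩
      exact hf0 _ (le_max_left a x)
    · filter_upwards [eventually_ge_atTop a] with x hx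
      rw [max_eq_right hx]
  simpa using (integrableOn_Ioi_deriv_of_nonpos' hf
    (fun x hx => by simpa using hD x (Ioi_subset_Ici_self hx)) hlim).neg

end RealAnalysis

section FirstOrderFilter

variable {s f : ℝ → ℝ} {η t₀ : ℝ}

theorem aestronglyMeasurable_input_of_hasDerivAt
    (hs : ∀ t ∈ Ioi t₀, HasDerivAt s (-η * s t + f t) t) :
    AEStronglyMeasurable f (volume.restrict (Ioi t₀)) := by
  have hsm := (HasDerivAt.continuousOn hs).aestronglyMeasurable (μ := volume) measurableSet_Ioi
  exact ((aestronglyMeasurable_of_hasDerivAt measurableSet_Ioi hs).add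
    (hsm.const_mul η)).congr (.of_forall fun t => by simp)

theorem integrableOn_sq_of_integrableOn_dissipation {r : ℝ → ℝ} (hη : 0 < η)
    (hs : ∀ t ∈ Ioi t₀, HasDerivAt s (-η * s t + f t) t) (hr : ∀ t ∈ Ioi t₀, 0 ≤ r t)
    (hD : IntegrableOn (fun t => 2 * η * s t ^ 2 + f t ^ 2 + r t) (Ioi t₀)) :
    IntegrableOn (fun t => s t ^ 2) (Ioi t₀) ∧ IntegrableOn (fun t => f t ^ 2) (Ioi t₀) := by
  have hsm := (HasDerivAt.continuousOn hs).aestronglyMeasurable (μ := volume) measurableSet_Ioi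
  have hr' : ∀ᵐ t ∂volume.restrict (Ioi t₀), 0 ≤ r t :=
    (ae_restrict_iff' measurableSet_Ioi).2 (.of_forall hr)
  constructor
  · refine (hD.div_const (2 * η)).mono' (hsm.pow 2) ?_
    filter_upwards [hr'] with t ht
    rw [Real.norm_eq_abs, abs_of_nonneg (sq_nonneg _), le_div_iff₀ (by positivity)]
    nlinarith [sq_nonneg (f t)]
  · refine hD.mono' ((aestronglyMeasurable_input_of_hasDerivAt hs).pow 2) ?_
    filter_upwards [hr'] with t ht
    rw [Real.norm_eq_abs, abs_of_nonneg (sq_nonneg _)]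
    nlinarith [sq_nonneg (s t)]

theorem tendsto_zero_of_sq_integrableOn (hs : ∀ t ∈ Ioi t₀, HasDerivAt s (-η * s t + f t) t)
    (hs2 : IntegrableOn (fun t => s t ^ 2) (Ioi t₀))
    (hf2 : IntegrableOn (fun t => f t ^ 2) (Ioi t₀)) : Tendsto s atTop (𝓝 0) := by
  refine tendsto_zero_of_hasDerivAt_of_sq_integrableOn_Ioi hs hs2 ?_
  refine ((hs2.const_mul (2 * η ^ 2)).add (hf2.const_mul 2)).mono'
    ((aestronglyMeasurable_of_hasDerivAt measurableSet_Ioi hs).pow 2) (.of_forall fun t => ?_)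
  rw [Pi.add_apply, Real.norm_eq_abs, abs_of_nonneg (sq_nonneg _)]
  nlinarith [sq_nonneg (η * s t + f t)]

end FirstOrderFilter

section CompositeAdaptation

variable {p : ℕ} {P : EuclideanSpace ℝ (Fin p) →L[ℝ] EuclideanSpace ℝ (Fin p)}
  {Q : ℝ → (EuclideanSpace ℝ (Fin p) →L[ℝ] EuclideanSpace ℝ (Fin p))}
  {y : EuclideanSpace ℝ (Fin p)} {t lam : ℝ}

theorem hasDerivAt_inner_apply_self_of_inverse_gain {b : ℝ → EuclideanSpace ℝ (Fin p)} {c : ℝ}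
    (hP : ∀ v w, ⟪P v, w⟫ = ⟪v, P w⟫)
    (hPQ : ∀ v, P (Q t v) = v) (hQP : ∀ v, Q t (P v) = v)
    (hQ : HasDerivAt Q ((-lam) • Q t + rankOne y) t) (hb : HasDerivAt b (-P (c • y)) t) :
    HasDerivAt (fun t => ⟪b t, Q t (b t)⟫)
      (-lam * ⟪b t, Q t (b t)⟫ + ⟪y, b t⟫ ^ 2 - 2 * c * ⟪y, b t⟫) t := by
  refine (hb.inner ℝ (hQ.clm_apply hb)).congr_deriv ?_
  simp only [rankOne, add_apply, smul_apply, ContinuousLinearMap.smulRight_apply,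
    innerSL_apply_apply, map_neg, map_smul, hQP,
    inner_neg_left, inner_neg_right, inner_add_right, inner_smul_left, inner_smul_right,
    hP y, hPQ, real_inner_comm (b t) y, conj_trivial]
  ring

theorem hasDerivAt_compositeLyapunov {s : ℝ → ℝ} {a : EuclideanSpace ℝ (Fin p)}
    {ahat : ℝ → EuclideanSpace ℝ (Fin p)} {η : ℝ}
    (hP : ∀ v w, ⟪P v, w⟫ = ⟪v, P w⟫)
    (hPQ : ∀ v, P (Q t v) = v) (hQP : ∀ v, Q t (P v) = v)
    (hQ : HasDerivAt Q ((-lam) • Q t + rankOne y) t)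
    (hs : HasDerivAt s (-η * s t + ⟪y, ahat t - a⟫) t)
    (ha : HasDerivAt ahat (-(P ((s t + ⟪y, ahat t - a⟫) • y))) t) :
    HasDerivAt (fun t => s t ^ 2 + ⟪ahat t - a, Q t (ahat t - a)⟫)
      (-(2 * η * s t ^ 2 + ⟪y, ahat t - a⟫ ^ 2 + lam * ⟪ahat t - a, Q t (ahat t - a)⟫)) t := by
  refine ((hs.fun_pow 2).fun_add
    (hasDerivAt_inner_apply_self_of_inverse_gain hP hPQ hQP hQ (ha.sub_const a))).congr_deriv ?_
  push_cast
  ring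

end CompositeAdaptation

/-- composite adaptation with bounded-gain-forgetting learning rate. -/
theorem bgf_composite_adaptation_linear
    {n p : ℕ}
    (x xd : ℝ → EuclideanSpace ℝ (Fin n))
    (s : ℝ → ℝ)
    (Y : ℝ → EuclideanSpace ℝ (Fin p))
    (a : EuclideanSpace ℝ (Fin p))
    (ahat : ℝ → EuclideanSpace ℝ (Fin p))
    (P Q : ℝ → (EuclideanSpace ℝ (Fin p) →L[ℝ] EuclideanSpace ℝ (Fin p)))
    (η lam₀ P₀ : ℝ)
    (hη : 0 < η) (hlam₀ : 0 < lam₀) (hP₀ : 0 < P₀)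
    -- P(t) is symmetric positive definite
    (hPsym : ∀ t, 0 ≤ t → ∀ v w : EuclideanSpace ℝ (Fin p), ⟪P t v, w⟫ = ⟪v, P t w⟫)
    (hPpos : ∀ t, 0 ≤ t → ∀ v : EuclideanSpace ℝ (Fin p), v ≠ 0 → 0 < ⟪v, P t v⟫)
    -- Q(t) = P(t)⁻¹
    (hPQ : ∀ t, 0 ≤ t →
      (P t).comp (Q t) = ContinuousLinearMap.id ℝ (EuclideanSpace ℝ (Fin p)) ∧
      (Q t).comp (P t) = ContinuousLinearMap.id ℝ (EuclideanSpace ℝ (Fin p)))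
    -- the forgetting factor keeps ‖P(t)‖ ≤ P₀ (so that λ(t) ≥ 0)
    (hPbd : ∀ t, 0 ≤ t → ‖P t‖ ≤ P₀)
    -- bounded-gain-forgetting dynamics (d/dt) P⁻¹ = -λ(t) P⁻¹ + YᵀY,
    -- λ(t) = λ₀ (1 - ‖P(t)‖/P₀)
    (hQdyn : ∀ t, 0 ≤ t →
      HasDerivAt Q ((-(lam₀ * (1 - ‖P t‖ / P₀))) • Q t + rankOne (Y t)) t)
    -- error dynamics ṡ = -η s + Y (â - a)
    (hs : ∀ t, 0 ≤ t → HasDerivAt s (-η * s t + ⟪Y t, ahat t - a⟫) t)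
    -- composite adaptation law â̇ = -P(t) Yᵀ (s + Y(â - a))
    (ha : ∀ t, 0 ≤ t →
      HasDerivAt ahat (-(P t ((s t + ⟪Y t, ahat t - a⟫) • Y t))) t)
    -- the regressor Y(x, t) is locally bounded in x uniformly in t
    (hYloc : ∀ R : ℝ, ∃ M : ℝ, ∀ t, 0 ≤ t → ‖x t‖ ≤ R → ‖Y t‖ ≤ M)
    -- boundedness of s implies boundedness of x
    (hsx : InLinf s → InLinf x)
    -- s → 0 implies x → x_d
    (hxd : Tendsto s atTop (nhds 0) →
      Tendsto (fun t => x t - xd t) atTop (nhds 0)) :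
    InLinf x ∧ InLinf ahat ∧
    (InL2 (fun t => ⟪Y t, ahat t - a⟫) ∧ InLinf (fun t => ⟪Y t, ahat t - a⟫)) ∧
    (InL2 s ∧ InLinf s) ∧
    Tendsto s atTop (nhds 0) ∧
    Tendsto (fun t => x t - xd t) atTop (nhds 0) := by
  set q : ℝ → ℝ := fun t => ⟪ahat t - a, Q t (ahat t - a)⟫
  set D : ℝ → ℝ := fun t => 2 * η * s t ^ 2 + ⟪Y t, ahat t - a⟫ ^ 2 + lam₀ * (1 - ‖P t‖ / P₀) * q t
  have hPQ' : ∀ t, 0 ≤ t → ∀ v, P t (Q t v) = v := fun t ht => DFunLike.congr_fun (hPQ t ht).1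
  have hQP' : ∀ t, 0 ≤ t → ∀ v, Q t (P t v) = v := fun t ht => DFunLike.congr_fun (hPQ t ht).2
  have hP : ∀ t, 0 ≤ t → (P t).IsPositive := fun t ht =>
    ContinuousLinearMap.isPositive_of_inner_pos (hPsym t ht) (hPpos t ht)
  have hq : ∀ t, 0 ≤ t → 0 ≤ q t := fun t ht => (hP t ht).inner_right_inverse_nonneg (hPQ' t ht) _
  have hr : ∀ t ∈ Ici 0, 0 ≤ lam₀ * (1 - ‖P t‖ / P₀) * q t := fun t ht =>
    mul_nonneg (mul_nonneg hlam₀.le (sub_nonneg.2 ((div_le_one hP₀).2 (hPbd t ht)))) (hq t ht)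
  have hV : ∀ t ∈ Ici 0, HasDerivAt (fun t => s t ^ 2 + q t) (-D t) t := fun t ht =>
    hasDerivAt_compositeLyapunov (hPsym t ht) (hPQ' t ht) (hQP' t ht) (hQdyn t ht) (hs t ht)
      (ha t ht)
  have hD : ∀ t ∈ Ici 0, 0 ≤ D t := fun t ht => by have := hr t ht; positivity
  have hVle : ∀ t, 0 ≤ t → s t ^ 2 + q t ≤ s 0 ^ 2 + q 0 := fun t ht =>
    antitoneOn_Ici_of_hasDerivAt_neg hV hD self_mem_Ici ht ht
  have hs₀ : ∀ t ∈ Ioi 0, HasDerivAt s (-η * s t + ⟪Y t, ahat t - a⟫) t := fun t ht => hs t ht.le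
  obtain ⟨hs2, hf2⟩ := integrableOn_sq_of_integrableOn_dissipation hη hs₀
    (fun t ht => hr t (Ioi_subset_Ici_self ht))
    (integrableOn_Ioi_of_hasDerivAt_neg hV hD fun t ht => by have := hq t ht; positivity)
  have hsinf : InLinf s := inLinf_of_norm_sq_le (C := s 0 ^ 2 + q 0) fun t ht => by
    rw [Real.norm_eq_abs, sq_abs]; linarith [hVle t ht, hq t ht]
  obtain ⟨Cx, hCx⟩ := hsx hsinf
  obtain ⟨M, hM⟩ := hYloc Cx
  have hbinf : InLinf fun t => ahat t - a :=
    inLinf_of_norm_sq_le (C := P₀ * (s 0 ^ 2 + q 0)) fun t ht =>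
      ((hP t ht).norm_sq_le_opNorm_mul_inner_right_inverse (hPQ' t ht) _).trans <|
        mul_le_mul (hPbd t ht) (by linarith [hVle t ht, sq_nonneg (s t)]) (hq t ht) hP₀.le
  have htend := tendsto_zero_of_sq_integrableOn hs₀ hs2 hf2
  exact ⟨⟨Cx, hCx⟩, hbinf.of_sub_const,
    ⟨inL2_of_integrableOn_sq hf2, InLinf.inner ⟨M, fun t ht => hM t ht (hCx t ht)⟩ hbinf⟩,
    ⟨inL2_of_integrableOn_sq hs2, hsinf⟩, htend, hxd htend⟩
end
end

section
/- Consider the error dynamics ṡ = −η s + f̃ with η > 0 under the monotonicity assumption (with function α(x, t) and constant D₁ > 0) and the additional lower-bound assumption |f̃| ≥ D₂ |α(x, t)ᵀ(â − a)| with constant D₂ > 0, together with the bounded-gain-forgetting adaptation law â̇ = −f̃ P(t) α(x(t), t), where P(t) is a symmetric positive definite matrix-valued signal satisfying (d/dt) P(t)⁻¹ = −λ(t) P(t)⁻¹ + α(x(t), t) α(x(t), t)ᵀ with forgetting factor λ(t) = λ₀(1 − ‖P(t)‖/P₀) ≥ 0 keeping ‖P(t)‖ ≤ P₀. If either D₁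 < 2 D₂² or D₂ > 1/2, then all trajectories (x, â) remain bounded, f̃ ∈ L², s ∈ L² ∩ L∞, s(t) → 0 as t → ∞, and x(t) → x_d(t). -/
open MeasureTheory Filter
open scoped RealInnerProductSpace ENNReal

noncomputable section

lemma key_quad {D₁ D₂ : ℝ} (hD₁ : 0 < D₁) (hD₂ : 0 < D₂)
    (hD : D₁ < 2 * D₂ ^ 2 ∨ 1 / 2 < D₂) :
    ∃ c : ℝ, 0 < c ∧ ∀ F m : ℝ, 0 ≤ m * F → (1 / D₁) * |F| ≤ |m| → D₂ * |m| ≤ |F| →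
      m ^ 2 - 2 * F * m ≤ -c * F ^ 2 := by
  rcases hD with hD | hD
  · refine ⟨2 / D₁ - 1 / D₂ ^ 2, by rw [sub_pos, div_lt_div_iff₀ (by positivity) hD₁]; nlinarith, ?_⟩
    intro F m h0 h1 h2
    have hFm : F * m = |F| * |m| := by
      rw [← abs_mul, abs_of_nonneg (by linarith [mul_comm m F] : (0:ℝ) ≤ F * m)]
    have hA : |F| ^ 2 = F ^ 2 := sq_abs F
    have hM : |m| ^ 2 = m ^ 2 := sq_abs m
    have h1' : |F| ≤ D₁ * |m| := by
      rw [div_mul_eq_mul_div, one_mul, div_le_iff₀ hD₁] at h1; linarith [mul_comm |m| D₁]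
    have hsq : D₂ ^ 2 * |m| ^ 2 ≤ |F| ^ 2 := by
      have := mul_le_mul h2 h2 (by positivity) (abs_nonneg F)
      nlinarith [this]
    have e1 : |m| ^ 2 ≤ (1 / D₂ ^ 2) * |F| ^ 2 := by
      rw [div_mul_eq_mul_div, one_mul, le_div_iff₀ (by positivity)]; nlinarith
    have e2 : (2 / D₁) * |F| ^ 2 ≤ 2 * (F * m) := by
      rw [hFm, div_mul_eq_mul_div, div_le_iff₀ hD₁]; nlinarith [abs_nonneg F, abs_nonneg m]
    have e2' : (2 / D₁) * |F| ^ 2 ≤ 2 * (|F| * |m|) := by rw [hFm] at e2; exact e2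
    have final : m ^ 2 - 2 * (F * m) ≤ -(2 / D₁ - 1 / D₂ ^ 2) * F ^ 2 := by
      rw [← hA, ← hM, hFm]; linarith [e1, e2']
    linarith [final]
  · have h2lt : 1 / D₂ < 2 := by rw [div_lt_iff₀ hD₂]; nlinarith
    refine ⟨(2 - 1 / D₂) / D₁, div_pos (by linarith) hD₁, ?_⟩
    intro F m h0 h1 h2
    have hFm : F * m = |F| * |m| := by
      rw [← abs_mul, abs_of_nonneg (by linarith [mul_comm m F] : (0:ℝ) ≤ F * m)]
    have hA : |F| ^ 2 = F ^ 2 := sq_abs F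
    have hM : |m| ^ 2 = m ^ 2 := sq_abs m
    have h2' : |m| ≤ (1/D₂) * |F| := by
      rw [div_mul_eq_mul_div, one_mul, le_div_iff₀ hD₂]; linarith [mul_comm |m| D₂]
    have hneg : |m| - 2 * |F| ≤ (1/D₂ - 2) * |F| := by nlinarith
    have hneg2 : (1/D₂ - 2) * |F| ≤ 0 := by nlinarith [abs_nonneg F]
    have step : |m| * (|m| - 2 * |F|) ≤ ((1/D₁) * |F|) * ((1/D₂ - 2) * |F|) := by
      calc |m| * (|m| - 2*|F|) ≤ |m| * ((1/D₂ - 2) * |F|) := by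
            nlinarith [abs_nonneg m]
        _ ≤ ((1/D₁) * |F|) * ((1/D₂ - 2) * |F|) := by nlinarith
    have goal' : |m|^2 - 2 * (|F| * |m|) ≤ -((2 - 1/D₂)/D₁) * |F|^2 := by
      have heq : ((1/D₁) * |F|) * ((1/D₂ - 2) * |F|) = -((2 - 1/D₂)/D₁) * |F|^2 := by ring
      nlinarith [step]
    have final : m ^ 2 - 2 * (F * m) ≤ -((2 - 1 / D₂) / D₁) * F ^ 2 := by
      rw [← hA, ← hM, hFm]; linarith [goal']
    linarith [final]

lemma psd_norm_sq_le {p : ℕ} (P : EuclideanSpace ℝ (Fin p) →L[ℝ] EuclideanSpace ℝ (Fin p))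
    (hsym : ∀ v w : EuclideanSpace ℝ (Fin p), ⟪P v, w⟫ = ⟪v, P w⟫)
    (hpos : ∀ v : EuclideanSpace ℝ (Fin p), v ≠ 0 → 0 < ⟪v, P v⟫)
    (w : EuclideanSpace ℝ (Fin p)) :
    ‖P w‖ ^ 2 ≤ ‖P‖ * ⟪P w, w⟫ := by
  have hnn : ∀ v : EuclideanSpace ℝ (Fin p), 0 ≤ ⟪v, P v⟫ := by
    intro v
    rcases eq_or_ne v 0 with h | h
    · simp [h]
    · exact (hpos v h).le
  rcases eq_or_ne (P w) 0 with hu | hu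
  · rw [hu]
    simp only [norm_zero, inner_zero_left, mul_zero]
    norm_num
  · set u := P w with hu_def
    have hupu : 0 < ⟪u, P u⟫ := hpos u hu
    have huw : ⟪u, P w⟫ = ⟪w, P u⟫ := by rw [← hsym u w]; exact real_inner_comm _ _
    have hq : ∀ r : ℝ, 0 ≤ ⟪w, P w⟫ - 2 * r * ⟪w, P u⟫ + r ^ 2 * ⟪u, P u⟫ := by
      intro r
      have h0 : 0 ≤ ⟪w - r • u, P (w - r • u)⟫ := hnn _
      have hexp : ⟪w - r • u, P (w - r • u)⟫
          = ⟪w, P w⟫ - 2 * r * ⟪w, P u⟫ + r ^ 2 * ⟪u, P u⟫ := by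
        simp only [map_sub, ContinuousLinearMap.map_smul, inner_sub_left, inner_sub_right,
          real_inner_smul_left, real_inner_smul_right, huw]
        ring
      rw [hexp] at h0
      exact h0
    have cs : ⟪w, P u⟫ ^ 2 ≤ ⟪w, P w⟫ * ⟪u, P u⟫ := by
      have h0' := hq (⟪w, P u⟫ / ⟪u, P u⟫)
      have hmul := mul_le_mul_of_nonneg_left h0' hupu.le
      have expand0 : ∀ C A W : ℝ, C ≠ 0 →
          C * (W - 2 * (A / C) * A + (A / C) ^ 2 * C) = W * C - A ^ 2 := by
        intro C A W hC
        field_simp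
        ring
      have expand := expand0 ⟪u, P u⟫ ⟪w, P u⟫ ⟪w, P w⟫ hupu.ne'
      rw [mul_zero, expand] at hmul
      linarith
    have hins : ⟪u, u⟫ = ‖u‖ ^ 2 := real_inner_self_eq_norm_sq u
    have h2 : ⟪u, u⟫ = ⟪w, P u⟫ := by rw [← hsym w u, ← hu_def]
    have hsq' : ‖u‖ ^ 2 = ⟪w, P u⟫ := by rw [← hins, h2]
    have hcs2 : ⟪u, P u⟫ ≤ ‖P‖ * ‖u‖ ^ 2 := by
      calc ⟪u, P u⟫ ≤ ‖u‖ * ‖P u‖ := real_inner_le_norm u (P u)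
        _ ≤ ‖u‖ * (‖P‖ * ‖u‖) := by
            have := P.le_opNorm u
            nlinarith [norm_nonneg u]
        _ = ‖P‖ * ‖u‖ ^ 2 := by ring
    have key : ⟪w, P u⟫ ^ 2 ≤ ⟪w, P w⟫ * (‖P‖ * ‖u‖ ^ 2) :=
      cs.trans (mul_le_mul_of_nonneg_left hcs2 (hnn w))
    have key2 : (‖u‖ ^ 2) ^ 2 ≤ ⟪w, P w⟫ * (‖P‖ * ‖u‖ ^ 2) := by
      have he : (‖u‖ ^ 2) ^ 2 = ⟪w, P u⟫ ^ 2 := by rw [hsq']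
      rw [he]; exact key
    have hu2 : 0 < ‖u‖ ^ 2 := by
      have : 0 < ‖u‖ := norm_pos_iff.mpr hu
      positivity
    have hgoal : ‖u‖ ^ 2 ≤ ‖P‖ * ⟪w, P w⟫ := by nlinarith [key2, hu2]
    rw [hsym w w]
    exact hgoal

/-- Decomposition of the lintegral over `Ici N` into unit intervals. -/
lemma lintegral_Ici_nat_eq_tsum (G : ℝ → ℝ≥0∞) (N : ℕ) :
    ∫⁻ t in Set.Ici ((N : ℕ) : ℝ), G t
      = ∑' k : ℕ, ∫⁻ t in Set.Ico (((N + k : ℕ) : ℝ)) (((N + k : ℕ) : ℝ) + 1), G t := by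
  have hset : Set.Ici ((N : ℕ) : ℝ)
      = ⋃ k : ℕ, Set.Ico (((N + k : ℕ) : ℝ)) (((N + k : ℕ) : ℝ) + 1) := by
    ext x
    simp only [Set.mem_Ici, Set.mem_iUnion, Set.mem_Ico]
    constructor
    · intro hx
      have hx0 : (0 : ℝ) ≤ x := le_trans (by positivity) hx
      have hNle : N ≤ ⌊x⌋₊ := Nat.le_floor hx
      refine ⟨⌊x⌋₊ - N, ?_, ?_⟩
      · rw [Nat.add_sub_cancel' hNle]
        exact Nat.floor_le hx0
      · rw [Nat.add_sub_cancel' hNle]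
        exact Nat.lt_floor_add_one x
    · rintro ⟨k, hk1, _⟩
      calc ((N : ℕ) : ℝ) ≤ ((N + k : ℕ) : ℝ) := by exact_mod_cast Nat.le_add_right N k
        _ ≤ x := hk1
  have hdisj : Pairwise (Function.onFun Disjoint
      fun k : ℕ => Set.Ico (((N + k : ℕ) : ℝ)) (((N + k : ℕ) : ℝ) + 1)) := by
    intro i j hij
    rcases lt_or_gt_of_ne hij with h | h
    · have hh : ((N + i : ℕ) : ℝ) + 1 ≤ ((N + j : ℕ) : ℝ) := by
        have h2 : (N + i) + 1 ≤ N + j := by omega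
        exact_mod_cast h2
      exact Set.Ico_disjoint_Ico.mpr ((min_le_left _ _).trans (hh.trans (le_max_right _ _)))
    · have hh : ((N + j : ℕ) : ℝ) + 1 ≤ ((N + i : ℕ) : ℝ) := by
        have h2 : (N + j) + 1 ≤ N + i := by omega
        exact_mod_cast h2
      exact Set.Ico_disjoint_Ico.mpr ((min_le_right _ _).trans (hh.trans (le_max_left _ _)))
  rw [hset, Measure.restrict_iUnion hdisj (fun k => measurableSet_Ico), lintegral_sum_measure]

/-- Partial sums of unit-interval lintegrals are bounded by the integral over `Icc 0 N`. -/
lemma sum_lintegral_le_Icc (G : ℝ → ℝ≥0∞) (N : ℕ) :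
    ∑ n ∈ Finset.range N, (∫⁻ t in Set.Ico ((n : ℕ) : ℝ) (((n : ℕ) : ℝ) + 1), G t)
      ≤ ∫⁻ t in Set.Icc (0 : ℝ) ((N : ℕ) : ℝ), G t := by
  have key : ∀ N : ℕ, ∑ n ∈ Finset.range N, (∫⁻ t in Set.Ico ((n : ℕ) : ℝ) (((n : ℕ) : ℝ) + 1), G t)
      = ∫⁻ t in Set.Ico (0 : ℝ) ((N : ℕ) : ℝ), G t := by
    intro N
    induction N with
    | zero => simp
    | succ N ih =>
      rw [Finset.sum_range_succ, ih]
      have hunion : Set.Ico (0 : ℝ) ((N : ℕ) : ℝ) ∪ Set.Ico ((N : ℕ) : ℝ) (((N : ℕ) : ℝ) + 1)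
          = Set.Ico (0 : ℝ) (((N + 1 : ℕ) : ℝ)) := by
        rw [Set.Ico_union_Ico_eq_Ico (by positivity) (by push_cast; linarith)]
        push_cast; norm_num
      have hdisj : Disjoint (Set.Ico (0 : ℝ) ((N : ℕ) : ℝ))
          (Set.Ico ((N : ℕ) : ℝ) (((N : ℕ) : ℝ) + 1)) := Set.Ico_disjoint_Ico_same
      rw [← hunion, Measure.restrict_union hdisj measurableSet_Ico, lintegral_add_measure]
  rw [key N]
  exact lintegral_mono' (Measure.restrict_mono Set.Ico_subset_Icc_self le_rfl) le_rfl

/-- Barbalat-type lemma: an `L²` Lipschitz (on `[0,∞)`) signal tends to `0`. -/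
lemma l2_lipschitz_tendsto (s : ℝ → ℝ) (K : ℝ) (hK : 0 < K)
    (hlip : ∀ u v : ℝ, 0 ≤ u → 0 ≤ v → |s u - s v| ≤ K * |u - v|)
    (hL2 : ∫⁻ t in Set.Ici (0 : ℝ), ENNReal.ofReal ((s t) ^ 2) < ⊤) :
    Tendsto s atTop (nhds 0) := by
  set G : ℝ → ℝ≥0∞ := fun t => ENNReal.ofReal ((s t) ^ 2) with hG
  have h0 : ∫⁻ t in Set.Ici (((0 : ℕ) : ℝ)), G t < ⊤ := by
    simpa using hL2
  set aG : ℕ → ℝ≥0∞ := fun n => ∫⁻ t in Set.Ico ((n : ℕ) : ℝ) (((n : ℕ) : ℝ) + 1), G t with haG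
  have htot : ∑' n, aG n < ⊤ := by
    have := lintegral_Ici_nat_eq_tsum G 0
    simp only [Nat.zero_add] at this
    rw [← this]
    simpa using hL2
  have htail : Tendsto (fun N : ℕ => ∑' k, aG (k + N)) atTop (nhds 0) :=
    ENNReal.tendsto_sum_nat_add aG htot.ne
  rw [Metric.tendsto_atTop]
  intro ε hε
  set δ : ℝ := ε / (2 * K) with hδ
  have hδpos : 0 < δ := by positivity
  have hbd : (0 : ℝ≥0∞) < ENNReal.ofReal ((ε / 2) ^ 2 * δ) := by
    rw [ENNReal.ofReal_pos]; positivity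
  have hev : ∀ᶠ N : ℕ in atTop, ∑' k, aG (k + N) < ENNReal.ofReal ((ε / 2) ^ 2 * δ) :=
    htail.eventually_lt_const hbd
  obtain ⟨N, hN⟩ := hev.exists
  refine ⟨(N : ℝ), fun t ht => ?_⟩
  rw [Real.dist_eq, sub_zero]
  by_contra hcon
  push_neg at hcon
  -- |s t| ≥ ε on [t, t+δ] up to ε/2
  have htN : (0 : ℝ) ≤ t := le_trans (Nat.cast_nonneg N) ht
  have hlb : ∀ u ∈ Set.Icc t (t + δ), (ε / 2) ^ 2 ≤ (s u) ^ 2 := by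
    intro u hu
    have hu0 : 0 ≤ u := le_trans htN hu.1
    have : |s t - s u| ≤ K * |t - u| := hlip t u htN hu0
    have habs : |t - u| ≤ δ := by
      rw [abs_le]; constructor <;> [linarith [hu.2]; linarith [hu.1]]
    have hKd : K * |t - u| ≤ K * δ := mul_le_mul_of_nonneg_left habs hK.le
    have hKδ : K * δ = ε / 2 := by rw [hδ]; field_simp
    have h1 : |s u| ≥ ε / 2 := by
      have := abs_sub_abs_le_abs_sub (s t) (s u)
      have h2 : |s t| ≥ ε := hcon
      linarith [this, hKd, hKδ ▸ (le_trans ‹|s t - s u| ≤ K * |t - u|› hKd)]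
    calc (ε / 2) ^ 2 ≤ |s u| ^ 2 := by nlinarith [abs_nonneg (s u)]
      _ = (s u) ^ 2 := sq_abs _
  -- contradiction with small tail
  have hsub : Set.Icc t (t + δ) ⊆ Set.Ici ((N : ℕ) : ℝ) := fun u hu => le_trans ht hu.1
  have hlow : ENNReal.ofReal ((ε / 2) ^ 2 * δ) ≤ ∫⁻ u in Set.Icc t (t + δ), G u := by
    have hmono : ∀ᵐ u ∂(volume.restrict (Set.Icc t (t + δ))),
        ENNReal.ofReal ((ε / 2) ^ 2) ≤ G u := by
      rw [ae_restrict_iff' measurableSet_Icc]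
      exact ae_of_all _ fun u hu => ENNReal.ofReal_le_ofReal (hlb u hu)
    calc ENNReal.ofReal ((ε / 2) ^ 2 * δ)
        = ENNReal.ofReal ((ε / 2) ^ 2) * ENNReal.ofReal δ := by
          rw [ENNReal.ofReal_mul (by positivity)]
      _ = ∫⁻ _ in Set.Icc t (t + δ), ENNReal.ofReal ((ε / 2) ^ 2) ∂volume := by
          rw [setLIntegral_const, Real.volume_Icc]
          congr 1
          ring_nf
      _ ≤ ∫⁻ u in Set.Icc t (t + δ), G u := lintegral_mono_ae hmono
  have hup : ∫⁻ u in Set.Icc t (t + δ), G u ≤ ∑' k, aG (k + N) := by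
    have h1 : ∫⁻ u in Set.Icc t (t + δ), G u ≤ ∫⁻ u in Set.Ici ((N : ℕ) : ℝ), G u :=
      lintegral_mono' (Measure.restrict_mono hsub le_rfl) le_rfl
    rw [lintegral_Ici_nat_eq_tsum G N] at h1
    refine h1.trans (le_of_eq ?_)
    apply tsum_congr
    intro k
    congr 2 <;> push_cast <;> ring
  exact absurd (lt_of_le_of_lt (hlow.trans hup) hN) (lt_irrefl _)

set_option maxHeartbeats 1000000 in
/-- bounded-gain-forgetting adaptation for nonlinearly parameterized
dynamics under the monotonicity and lower-bound assumptions. -/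
theorem bgf_adaptation_nonlinear
    {n p : ℕ}
    (x xd : ℝ → EuclideanSpace ℝ (Fin n))
    (s : ℝ → ℝ)
    (f : EuclideanSpace ℝ (Fin n) → EuclideanSpace ℝ (Fin p) → ℝ → ℝ)
    (α : EuclideanSpace ℝ (Fin n) → ℝ → EuclideanSpace ℝ (Fin p))
    (a : EuclideanSpace ℝ (Fin p))
    (ahat : ℝ → EuclideanSpace ℝ (Fin p))
    (P Q : ℝ → (EuclideanSpace ℝ (Fin p) →L[ℝ] EuclideanSpace ℝ (Fin p)))
    (η lam₀ P₀ D₁ D₂ : ℝ)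
    (hη : 0 < η) (hlam₀ : 0 < lam₀) (hP₀ : 0 < P₀) (hD₁ : 0 < D₁) (hD₂ : 0 < D₂)
    -- either D₁ < 2 D₂² or D₂ > 1/2
    (hD : D₁ < 2 * D₂ ^ 2 ∨ 1 / 2 < D₂)
    -- monotonicity assumption
    (hmono₁ : ∀ (b : EuclideanSpace ℝ (Fin p)) (ξ : EuclideanSpace ℝ (Fin n)) (t : ℝ),
      0 ≤ t → 0 ≤ ⟪b - a, α ξ t⟫ * (f ξ b t - f ξ a t))
    (hmono₂ : ∀ (b : EuclideanSpace ℝ (Fin p)) (ξ : EuclideanSpace ℝ (Fin n)) (t : ℝ),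
      0 ≤ t → (1 / D₁) * |f ξ b t - f ξ a t| ≤ |⟪α ξ t, b - a⟫|)
    -- lower-bound assumption |f̃| ≥ D₂ |αᵀ(â - a)|
    (hlow : ∀ (b : EuclideanSpace ℝ (Fin p)) (ξ : EuclideanSpace ℝ (Fin n)) (t : ℝ),
      0 ≤ t → D₂ * |⟪α ξ t, b - a⟫| ≤ |f ξ b t - f ξ a t|)
    -- P(t) is symmetric positive definite
    (hPsym : ∀ t, 0 ≤ t → ∀ v w : EuclideanSpace ℝ (Fin p), ⟪P t v, w⟫ = ⟪v, P t w⟫)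
    (hPpos : ∀ t, 0 ≤ t → ∀ v : EuclideanSpace ℝ (Fin p), v ≠ 0 → 0 < ⟪v, P t v⟫)
    -- Q(t) = P(t)⁻¹
    (hPQ : ∀ t, 0 ≤ t →
      (P t).comp (Q t) = ContinuousLinearMap.id ℝ (EuclideanSpace ℝ (Fin p)) ∧
      (Q t).comp (P t) = ContinuousLinearMap.id ℝ (EuclideanSpace ℝ (Fin p)))
    -- the forgetting factor keeps ‖P(t)‖ ≤ P₀ (so that λ(t) ≥ 0)
    (hPbd : ∀ t, 0 ≤ t → ‖P t‖ ≤ P₀)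
    -- bounded-gain-forgetting dynamics (d/dt) P⁻¹ = -λ(t) P⁻¹ + α αᵀ,
    -- λ(t) = λ₀ (1 - ‖P(t)‖/P₀)
    (hQdyn : ∀ t, 0 ≤ t →
      HasDerivAt Q ((-(lam₀ * (1 - ‖P t‖ / P₀))) • Q t + rankOne (α (x t) t)) t)
    -- error dynamics ṡ = -η s + f̃
    (hs : ∀ t, 0 ≤ t →
      HasDerivAt s (-η * s t + (f (x t) (ahat t) t - f (x t) a t)) t)
    -- adaptation law â̇ = -f̃ P(t) α(x(t), t)
    (ha : ∀ t, 0 ≤ t →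
      HasDerivAt ahat
        (-((f (x t) (ahat t) t - f (x t) a t) • P t (α (x t) t))) t)
    -- f̃ is locally bounded in (x, â) uniformly in t
    (hfloc : ∀ R : ℝ, ∃ M : ℝ,
      ∀ (ξ : EuclideanSpace ℝ (Fin n)) (b : EuclideanSpace ℝ (Fin p)) (t : ℝ),
        0 ≤ t → ‖ξ‖ ≤ R → ‖b‖ ≤ R → |f ξ b t - f ξ a t| ≤ M)
    -- boundedness of s implies boundedness of x
    (hsx : InLinf s → InLinf x)
    -- s → 0 implies x → x_d
    (hxd : Tendsto s atTop (nhds 0) →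
      Tendsto (fun t => x t - xd t) atTop (nhds 0)) :
    InLinf x ∧ InLinf ahat ∧
    InL2 (fun t => f (x t) (ahat t) t - f (x t) a t) ∧
    (InL2 s ∧ InLinf s) ∧
    Tendsto s atTop (nhds 0) ∧
    Tendsto (fun t => x t - xd t) atTop (nhds 0) := by
  obtain ⟨c, hc, hkey⟩ := key_quad hD₁ hD₂ hD
  set ft : ℝ → ℝ := fun t => f (x t) (ahat t) t - f (x t) a t with hft_def
  set er : ℝ → EuclideanSpace ℝ (Fin p) := fun t => ahat t - a with her_def
  set mm : ℝ → ℝ := fun t => ⟪α (x t) t, er t⟫ with hmm_def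
  set B : ℝ → ℝ := fun t => ⟪er t, Q t (er t)⟫ with hB_def
  set lam : ℝ → ℝ := fun t => lam₀ * (1 - ‖P t‖ / P₀) with hlam_def
  set V : ℝ → ℝ := fun t => η * c * (s t) ^ 2 + B t with hV_def
  set VD : ℝ → ℝ := fun t => η * c * (2 * s t * (-η * s t + ft t))
      + (-(lam t) * B t + (mm t) ^ 2 - 2 * ft t * mm t) with hVD_def
  have hft_eq : ∀ u, ft u = f (x u) (ahat u) u - f (x u) a u := fun _ => rfl
  have her_eq : ∀ u, er u = ahat u - a := fun _ => rfl
  have hmm_eq : ∀ u, mm u = ⟪α (x u) u, er u⟫ := fun _ => rfl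
  have hB_eq : ∀ u, B u = ⟪er u, Q u (er u)⟫ := fun _ => rfl
  have hlam_eq : ∀ u, lam u = lam₀ * (1 - ‖P u‖ / P₀) := fun _ => rfl
  have hV_eq : ∀ u, V u = η * c * (s u) ^ 2 + B u := fun _ => rfl
  have hVD_eq : ∀ u, VD u = η * c * (2 * s u * (-η * s u + ft u))
      + (-(lam u) * B u + (mm u) ^ 2 - 2 * ft u * mm u) := fun _ => rfl
  have hm1s : ∀ t, 0 ≤ t → 0 ≤ mm t * ft t := by
    intro t ht
    have h := hmono₁ (ahat t) (x t) t ht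
    have hcomm : ⟪ahat t - a, α (x t) t⟫ = mm t := real_inner_comm _ _
    rw [hcomm] at h
    exact h
  have hm2s : ∀ t, 0 ≤ t → (1/D₁) * |ft t| ≤ |mm t| := fun t ht => hmono₂ (ahat t) (x t) t ht
  have hm3s : ∀ t, 0 ≤ t → D₂ * |mm t| ≤ |ft t| := fun t ht => hlow (ahat t) (x t) t ht
  -- inverse identities
  have hQP : ∀ t, 0 ≤ t → ∀ v : EuclideanSpace ℝ (Fin p), Q t (P t v) = v := by
    intro t ht v
    have h := congrArg (fun L : EuclideanSpace ℝ (Fin p) →L[ℝ] EuclideanSpace ℝ (Fin p) => L v)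
      (hPQ t ht).2
    simpa using h
  have hPQv : ∀ t, 0 ≤ t → ∀ v : EuclideanSpace ℝ (Fin p), P t (Q t v) = v := by
    intro t ht v
    have h := congrArg (fun L : EuclideanSpace ℝ (Fin p) →L[ℝ] EuclideanSpace ℝ (Fin p) => L v)
      (hPQ t ht).1
    simpa using h
  have hQpos : ∀ t, 0 ≤ t → ∀ v : EuclideanSpace ℝ (Fin p), 0 ≤ ⟪v, Q t v⟫ := by
    intro t ht v
    have base : 0 ≤ ⟪Q t v, P t (Q t v)⟫ := by
      rcases eq_or_ne (Q t v) 0 with h | h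
      · simp [h]
      · exact (hPpos t ht _ h).le
    calc (0:ℝ) ≤ ⟪Q t v, P t (Q t v)⟫ := base
      _ = ⟪P t (Q t v), Q t v⟫ := real_inner_comm _ _
      _ = ⟪v, Q t v⟫ := by rw [hPQv t ht v]
  have hlamnn : ∀ t, 0 ≤ t → 0 ≤ lam t := by
    intro t ht
    have h1 : ‖P t‖ / P₀ ≤ 1 := (div_le_one hP₀).mpr (hPbd t ht)
    exact mul_nonneg hlam₀.le (by linarith)
  have hBnn : ∀ t, 0 ≤ t → 0 ≤ B t := fun t ht => hQpos t ht (er t)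
  have hVnn : ∀ t, 0 ≤ t → 0 ≤ V t := by
    intro t ht
    have h1 : 0 ≤ η * c * (s t) ^ 2 := by positivity
    have h2 := hBnn t ht
    rw [hV_eq t]
    linarith
  -- derivative of V
  have hVderiv : ∀ t, 0 ≤ t → HasDerivAt V (VD t) t := by
    intro t ht
    have hsd := hs t ht
    have h1 : HasDerivAt (fun τ => (s τ) ^ 2) (2 * s t * (-η * s t + ft t)) t := by
      have h0 := hsd.pow 2
      have he : ((2:ℕ):ℝ) * s t ^ (2-1) * (-η * s t + (f (x t) (ahat t) t - f (x t) a t))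
          = 2 * s t * (-η * s t + ft t) := by
        simp only [hft_def]
        push_cast
        ring
      rw [he] at h0
      exact h0
    have h2 : HasDerivAt er (-(ft t • P t (α (x t) t))) t := (ha t ht).sub_const a
    have h3 : HasDerivAt (fun τ => Q τ (er τ))
        (((-(lam t)) • Q t + rankOne (α (x t) t)) (er t)
          + Q t (-(ft t • P t (α (x t) t)))) t := (hQdyn t ht).clm_apply h2
    have h4 : HasDerivAt B
        (⟪er t, ((-(lam t)) • Q t + rankOne (α (x t) t)) (er t)
            + Q t (-(ft t • P t (α (x t) t)))⟫
          + ⟪-(ft t • P t (α (x t) t)), Q t (er t)⟫) t := h2.inner ℝ h3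
    have h5 := (h1.const_mul (η * c)).add h4
    have h6 : HasDerivAt V (η * c * (2 * s t * (-η * s t + ft t))
        + (⟪er t, ((-(lam t)) • Q t + rankOne (α (x t) t)) (er t)
            + Q t (-(ft t • P t (α (x t) t)))⟫
          + ⟪-(ft t • P t (α (x t) t)), Q t (er t)⟫)) t := h5
    convert h6 using 1
    have eA : Q t (-(ft t • P t (α (x t) t))) = -(ft t • α (x t) t) := by
      rw [map_neg, ContinuousLinearMap.map_smul, hQP t ht]
    have eB : ⟪-(ft t • P t (α (x t) t)), Q t (er t)⟫ = -(ft t * mm t) := by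
      rw [inner_neg_left, real_inner_smul_left, hPsym t ht (α (x t) t) (Q t (er t)),
        hPQv t ht (er t)]
    have hr : (rankOne (α (x t) t)) (er t) = ⟪α (x t) t, er t⟫ • α (x t) t := rfl
    have eC : ⟪er t, ((-(lam t)) • Q t + rankOne (α (x t) t)) (er t)
        + Q t (-(ft t • P t (α (x t) t)))⟫
        = -(lam t) * B t + mm t * ⟪er t, α (x t) t⟫ - ft t * ⟪er t, α (x t) t⟫ := by
      rw [eA, ContinuousLinearMap.add_apply, ContinuousLinearMap.smul_apply, hr]
      rw [inner_add_right, inner_add_right, real_inner_smul_right, real_inner_smul_right,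
        inner_neg_right, real_inner_smul_right]
      simp only [hB_def, hmm_def]
      ring
    rw [eB, eC]
    have hcomm : ⟪er t, α (x t) t⟫ = mm t := by
      rw [hmm_def]
      exact real_inner_comm _ _
    rw [hcomm]
    simp only [hVD_def]
    ring
  clear_value ft er mm B lam V VD
  -- derivative bound
  have hVD_le : ∀ t, 0 ≤ t → VD t ≤ -(c/3) * ((ft t)^2 + η^2 * (s t)^2) := by
    intro t ht
    have hq := hkey (ft t) (mm t) (hm1s t ht) (hm2s t ht) (hm3s t ht)
    have hlB : 0 ≤ lam t * B t := mul_nonneg (hlamnn t ht) (hBnn t ht)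
    have step1 : VD t ≤ η * c * (2 * s t * (-η * s t + ft t)) - c * (ft t)^2 := by
      rw [hVD_eq t]
      linarith [hq, hlB]
    have step2 : η * c * (2 * s t * (-η * s t + ft t)) - c * (ft t)^2
        ≤ -(c/3) * ((ft t)^2 + η^2 * (s t)^2) := by
      nlinarith [mul_nonneg hc.le (sq_nonneg (2 * ft t - 3 * η * s t)),
        mul_nonneg hc.le (sq_nonneg (η * s t))]
    exact step1.trans step2
  -- V is antitone
  have hVanti : AntitoneOn V (Set.Ici (0:ℝ)) := by
    apply antitoneOn_of_deriv_nonpos (convex_Ici 0)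
    · intro t ht
      exact (hVderiv t ht).continuousAt.continuousWithinAt
    · rw [interior_Ici]
      intro t ht
      exact (hVderiv t (le_of_lt ht)).differentiableAt.differentiableWithinAt
    · rw [interior_Ici]
      intro t ht
      rw [(hVderiv t ht.le).deriv]
      have h1 := hVD_le t ht.le
      have h2 : 0 ≤ (c/3) * ((ft t)^2 + η^2*(s t)^2) := by positivity
      linarith
  have hVle0 : ∀ t, 0 ≤ t → V t ≤ V 0 := fun t ht => hVanti Set.self_mem_Ici ht ht
  -- s bounded
  have hsb : ∀ t, 0 ≤ t → |s t| ≤ Real.sqrt (V 0 / (η * c)) := by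
    intro t ht
    have hVt : η * c * (s t)^2 + B t ≤ V 0 := by rw [← hV_eq t]; exact hVle0 t ht
    have hB := hBnn t ht
    have h2 : (s t)^2 ≤ V 0 / (η * c) := by
      rw [le_div_iff₀ (by positivity)]
      nlinarith
    calc |s t| = Real.sqrt ((s t)^2) := (Real.sqrt_sq_eq_abs (s t)).symm
      _ ≤ _ := Real.sqrt_le_sqrt h2
  have hsL : InLinf s := ⟨Real.sqrt (V 0 / (η * c)), fun t ht => by
    rw [Real.norm_eq_abs]; exact hsb t ht⟩
  have hxL : InLinf x := hsx hsL
  -- ahat bounded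
  have herb : ∀ t, 0 ≤ t → ‖er t‖^2 ≤ P₀ * V 0 := by
    intro t ht
    have h1 : ‖P t (Q t (er t))‖^2 ≤ ‖P t‖ * ⟪P t (Q t (er t)), Q t (er t)⟫ :=
      psd_norm_sq_le (P t) (hPsym t ht) (hPpos t ht) (Q t (er t))
    rw [hPQv t ht (er t), ← hB_eq t] at h1
    have hBb : B t ≤ V 0 := by
      have hVt : η * c * (s t)^2 + B t ≤ V 0 := by rw [← hV_eq t]; exact hVle0 t ht
      nlinarith [sq_nonneg (s t), mul_nonneg (mul_nonneg hη.le hc.le) (sq_nonneg (s t))]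
    have hPn : ‖P t‖ ≤ P₀ := hPbd t ht
    calc ‖er t‖^2 ≤ ‖P t‖ * B t := h1
      _ ≤ P₀ * V 0 := mul_le_mul hPn hBb (hBnn t ht) hP₀.le
  have haL : InLinf ahat := by
    refine ⟨Real.sqrt (P₀ * V 0) + ‖a‖, fun t ht => ?_⟩
    have h1 : ‖ahat t‖ ≤ ‖er t‖ + ‖a‖ := by
      have he : ahat t = er t + a := by rw [her_eq t]; abel
      rw [he]
      exact norm_add_le _ _
    have h2 : ‖er t‖ ≤ Real.sqrt (P₀ * V 0) := by
      have h3 : ‖er t‖ = Real.sqrt (‖er t‖^2) := (Real.sqrt_sq (norm_nonneg _)).symm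
      rw [h3]
      exact Real.sqrt_le_sqrt (herb t ht)
    linarith
  -- ft bounded
  obtain ⟨Cx, hCx⟩ := hxL
  obtain ⟨Ca, hCa⟩ := haL
  obtain ⟨M0, hM0⟩ := hfloc (max Cx Ca)
  have hftb : ∀ t, 0 ≤ t → |ft t| ≤ M0 := by
    intro t ht
    have h := hM0 (x t) (ahat t) t ht ((hCx t ht).trans (le_max_left _ _))
      ((hCa t ht).trans (le_max_right _ _))
    rw [← hft_eq t] at h
    exact h
  have hM0nn : 0 ≤ M0 := (abs_nonneg _).trans (hftb 0 le_rfl)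
  -- main integral bound
  have key_int : ∀ T : ℝ, 0 ≤ T →
      ∫⁻ u in Set.Icc (0:ℝ) T, ENNReal.ofReal ((c/3) * ((ft u)^2 + η^2*(s u)^2))
        ≤ ENNReal.ofReal (V 0) := by
    intro T hT
    set W : ℝ → ℝ := fun u => -V u with hW_def
    set WD : ℝ → ℝ := fun u => -VD u with hWD_def
    have hW_eq : ∀ u, W u = -V u := fun _ => rfl
    have hWD_eq : ∀ u, WD u = -VD u := fun _ => rfl
    have hWd : ∀ u ∈ Set.uIcc (0:ℝ) T, HasDerivAt W (WD u) u := by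
      intro u hu
      rw [Set.uIcc_of_le hT] at hu
      exact (hVderiv u hu.1).neg
    clear_value W WD
    have hWD_nn : ∀ u, 0 ≤ u → (c/3) * ((ft u)^2 + η^2*(s u)^2) ≤ WD u := by
      intro u hu
      have h1 := hVD_le u hu
      rw [hWD_eq u]
      linarith
    have hcont : ContinuousOn W (Set.uIcc (0:ℝ) T) :=
      fun u hu => (hWd u hu).continuousAt.continuousWithinAt
    have hint : IntervalIntegrable WD volume 0 T := by
      apply intervalIntegral.intervalIntegrable_deriv_of_nonneg hcont
      · intro u hu
        rw [min_eq_left hT, max_eq_right hT] at hu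
        exact hWd u (by rw [Set.uIcc_of_le hT]; exact Set.mem_Icc_of_Ioo hu)
      · intro u hu
        rw [min_eq_left hT, max_eq_right hT] at hu
        have h1 := hWD_nn u hu.1.le
        have h2 : 0 ≤ (c/3) * ((ft u)^2 + η^2*(s u)^2) := by positivity
        linarith
    have hftc : ∫ u in (0:ℝ)..T, WD u = W T - W 0 :=
      intervalIntegral.integral_eq_sub_of_hasDerivAt hWd hint
    have hWb : W T - W 0 ≤ V 0 := by
      have h1 := hVnn T hT
      have h2 := hVnn 0 le_rfl
      rw [hW_eq T, hW_eq 0]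
      linarith
    have hIoc : ∫⁻ u in Set.Icc (0:ℝ) T, ENNReal.ofReal ((c/3) * ((ft u)^2 + η^2*(s u)^2))
        ≤ ∫⁻ u in Set.Icc (0:ℝ) T, ENNReal.ofReal (WD u) :=
      lintegral_mono_ae ((ae_restrict_iff' measurableSet_Icc).2
        (ae_of_all _ fun u hu => ENNReal.ofReal_le_ofReal (hWD_nn u hu.1)))
    have hIcc_Ioc : ∫⁻ u in Set.Icc (0:ℝ) T, ENNReal.ofReal (WD u)
        = ∫⁻ u in Set.Ioc (0:ℝ) T, ENNReal.ofReal (WD u) :=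
      (setLIntegral_congr Ioc_ae_eq_Icc).symm
    have hIntOn : IntegrableOn WD (Set.Ioc (0:ℝ) T) volume := by
      have h1 := hint
      rw [intervalIntegrable_iff, Set.uIoc_of_le hT] at h1
      exact h1
    have hnnae : 0 ≤ᵐ[volume.restrict (Set.Ioc (0:ℝ) T)] WD := by
      filter_upwards [ae_restrict_mem measurableSet_Ioc] with u hu
      have h1 := hWD_nn u hu.1.le
      have h2 : 0 ≤ (c/3) * ((ft u)^2 + η^2*(s u)^2) := by positivity
      simpa using le_trans h2 h1
    have hOR : ∫⁻ u in Set.Ioc (0:ℝ) T, ENNReal.ofReal (WD u)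
        = ENNReal.ofReal (∫ u in Set.Ioc (0:ℝ) T, WD u) :=
      (ofReal_integral_eq_lintegral_ofReal hIntOn hnnae).symm
    have hIocInt : ∫ u in Set.Ioc (0:ℝ) T, WD u = ∫ u in (0:ℝ)..T, WD u :=
      (intervalIntegral.integral_of_le hT).symm
    calc ∫⁻ u in Set.Icc (0:ℝ) T, ENNReal.ofReal ((c/3) * ((ft u)^2 + η^2*(s u)^2))
        ≤ ∫⁻ u in Set.Icc (0:ℝ) T, ENNReal.ofReal (WD u) := hIoc
      _ = ENNReal.ofReal (∫ u in Set.Ioc (0:ℝ) T, WD u) := by rw [hIcc_Ioc, hOR]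
      _ = ENNReal.ofReal (W T - W 0) := by rw [hIocInt, hftc]
      _ ≤ ENNReal.ofReal (V 0) := ENNReal.ofReal_le_ofReal hWb
  -- total lintegral bound on [0, ∞)
  have htotal : ∫⁻ u in Set.Ici (0:ℝ),
      ENNReal.ofReal ((c/3) * ((ft u)^2 + η^2*(s u)^2)) ≤ ENNReal.ofReal (V 0) := by
    set GG : ℝ → ℝ≥0∞ := fun u => ENNReal.ofReal ((c/3) * ((ft u)^2 + η^2*(s u)^2)) with hGG
    have h1 := lintegral_Ici_nat_eq_tsum GG 0
    have h0 : (((0:ℕ)):ℝ) = (0:ℝ) := by norm_num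
    rw [h0] at h1
    rw [h1, ENNReal.tsum_eq_iSup_sum]
    apply iSup_le
    intro F
    have hFsub : F ⊆ Finset.range (F.sup id + 1) := by
      intro n hn
      rw [Finset.mem_range]
      exact Nat.lt_succ_of_le (Finset.le_sup (f := id) hn)
    calc ∑ k ∈ F, ∫⁻ u in Set.Ico (((0 + k : ℕ)):ℝ) ((((0 + k:ℕ)):ℝ)+1), GG u
        = ∑ k ∈ F, ∫⁻ u in Set.Ico ((k:ℕ):ℝ) (((k:ℕ):ℝ)+1), GG u := by
          apply Finset.sum_congr rfl
          intro k _
          norm_num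
      _ ≤ ∑ k ∈ Finset.range (F.sup id + 1), ∫⁻ u in Set.Ico ((k:ℕ):ℝ) (((k:ℕ):ℝ)+1), GG u :=
          Finset.sum_le_sum_of_subset hFsub
      _ ≤ ∫⁻ u in Set.Icc (0:ℝ) (((F.sup id + 1 : ℕ)):ℝ), GG u := sum_lintegral_le_Icc GG _
      _ ≤ ENNReal.ofReal (V 0) := key_int _ (by positivity)
  -- L² of ft
  have hftL2 : InL2 ft := by
    unfold InL2
    have hcongr : ∫⁻ u in Set.Ici (0:ℝ), ENNReal.ofReal (‖ft u‖^2)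
        = ∫⁻ u in Set.Ici (0:ℝ), ENNReal.ofReal ((ft u)^2) :=
      lintegral_congr fun u => by rw [Real.norm_eq_abs, sq_abs]
    rw [hcongr]
    have hpt : ∀ u, ENNReal.ofReal ((ft u)^2)
        ≤ ENNReal.ofReal (3/c) * ENNReal.ofReal ((c/3) * ((ft u)^2 + η^2*(s u)^2)) := by
      intro u
      rw [← ENNReal.ofReal_mul (by positivity : (0:ℝ) ≤ 3/c)]
      apply ENNReal.ofReal_le_ofReal
      have h3 : (3/c) * ((c/3)*((ft u)^2+η^2*(s u)^2)) = (ft u)^2 + η^2*(s u)^2 := by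
        field_simp
      rw [h3]
      nlinarith [sq_nonneg (η * s u), sq_nonneg (s u), sq_nonneg η]
    calc ∫⁻ u in Set.Ici (0:ℝ), ENNReal.ofReal ((ft u)^2)
        ≤ ∫⁻ u in Set.Ici (0:ℝ),
            ENNReal.ofReal (3/c) * ENNReal.ofReal ((c/3) * ((ft u)^2 + η^2*(s u)^2)) :=
          lintegral_mono hpt
      _ = ENNReal.ofReal (3/c)
            * ∫⁻ u in Set.Ici (0:ℝ), ENNReal.ofReal ((c/3) * ((ft u)^2 + η^2*(s u)^2)) :=
          lintegral_const_mul' _ _ ENNReal.ofReal_ne_top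
      _ ≤ ENNReal.ofReal (3/c) * ENNReal.ofReal (V 0) :=
          mul_le_mul_right htotal _
      _ < ⊤ := ENNReal.mul_lt_top ENNReal.ofReal_lt_top ENNReal.ofReal_lt_top
  -- L² of s
  have hsL2 : InL2 s := by
    unfold InL2
    have hcongr : ∫⁻ u in Set.Ici (0:ℝ), ENNReal.ofReal (‖s u‖^2)
        = ∫⁻ u in Set.Ici (0:ℝ), ENNReal.ofReal ((s u)^2) :=
      lintegral_congr fun u => by rw [Real.norm_eq_abs, sq_abs]
    rw [hcongr]
    have hpt : ∀ u, ENNReal.ofReal ((s u)^2)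
        ≤ ENNReal.ofReal (3/(c*η^2)) * ENNReal.ofReal ((c/3) * ((ft u)^2 + η^2*(s u)^2)) := by
      intro u
      rw [← ENNReal.ofReal_mul (by positivity : (0:ℝ) ≤ 3/(c*η^2))]
      apply ENNReal.ofReal_le_ofReal
      have h3 : (3/(c*η^2)) * ((c/3)*((ft u)^2+η^2*(s u)^2))
          = ((ft u)^2 + η^2*(s u)^2) / η^2 := by
        field_simp
      rw [h3, le_div_iff₀ (by positivity)]
      nlinarith [sq_nonneg (ft u)]
    calc ∫⁻ u in Set.Ici (0:ℝ), ENNReal.ofReal ((s u)^2)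
        ≤ ∫⁻ u in Set.Ici (0:ℝ),
            ENNReal.ofReal (3/(c*η^2)) * ENNReal.ofReal ((c/3) * ((ft u)^2 + η^2*(s u)^2)) :=
          lintegral_mono hpt
      _ = ENNReal.ofReal (3/(c*η^2))
            * ∫⁻ u in Set.Ici (0:ℝ), ENNReal.ofReal ((c/3) * ((ft u)^2 + η^2*(s u)^2)) :=
          lintegral_const_mul' _ _ ENNReal.ofReal_ne_top
      _ ≤ ENNReal.ofReal (3/(c*η^2)) * ENNReal.ofReal (V 0) :=
          mul_le_mul_right htotal _
      _ < ⊤ := ENNReal.mul_lt_top ENNReal.ofReal_lt_top ENNReal.ofReal_lt_top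
  -- s tends to 0
  have htend : Tendsto s atTop (nhds 0) := by
    set Cs : ℝ := Real.sqrt (V 0 / (η * c)) with hCs
    have hCsnn : 0 ≤ Cs := Real.sqrt_nonneg _
    set K : ℝ := η * Cs + M0 + 1 with hK
    have hKpos : 0 < K := by positivity
    have hlip : ∀ u v : ℝ, 0 ≤ u → 0 ≤ v → |s u - s v| ≤ K * |u - v| := by
      intro u v hu hv
      have hb : ∀ w ∈ Set.Ici (0:ℝ), ‖-η * s w + ft w‖ ≤ K := by
        intro w hw
        have h1 := hsb w hw
        have h2 := hftb w hw
        rw [Real.norm_eq_abs]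
        calc |(-η) * s w + ft w| ≤ |(-η) * s w| + |ft w| := abs_add_le _ _
          _ = η * |s w| + |ft w| := by rw [abs_mul, abs_neg, abs_of_pos hη]
          _ ≤ η * Cs + M0 := by
              have := mul_le_mul_of_nonneg_left h1 hη.le
              linarith
          _ ≤ K := by simp only [hK]; linarith
      have hder : ∀ w ∈ Set.Ici (0:ℝ),
          HasDerivWithinAt s (-η * s w + ft w) (Set.Ici (0:ℝ)) w := by
        intro w hw
        rw [hft_eq w]
        exact (hs w hw).hasDerivWithinAt
      have := Convex.norm_image_sub_le_of_norm_hasDerivWithin_le hder hb (convex_Ici 0) hv hu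
      simpa [Real.norm_eq_abs] using this
    have hsl2' : ∫⁻ t in Set.Ici (0:ℝ), ENNReal.ofReal ((s t)^2) < ⊤ := by
      have hcongr : ∫⁻ u in Set.Ici (0:ℝ), ENNReal.ofReal (‖s u‖^2)
          = ∫⁻ u in Set.Ici (0:ℝ), ENNReal.ofReal ((s u)^2) :=
        lintegral_congr fun u => by rw [Real.norm_eq_abs, sq_abs]
      rw [← hcongr]
      exact hsL2
    exact l2_lipschitz_tendsto s K hKpos hlip hsl2'
  exact ⟨⟨Cx, hCx⟩, ⟨Ca, hCa⟩, hftL2, ⟨hsL2, hsL⟩, htend, hxd htend⟩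

end
end
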